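/- arXiv:math/0103221 — 7 statements merged into one kernel-verified Lean document; each statement's English description precedes it below -/
import Mathlib

section
/- Let C be a connected subset of ℝ². Then ℋ¹(C̄) = ℋ¹(C), where C̄ denotes the closure of C. -/
open MeasureTheory

noncomputable section

/-- The plane `ℝ²`. -/
abbrev E2 : Type := EuclideanSpace ℝ (Fin 2)

open Metric Set Filter
open scoped ENNReal NNReal Topology

lemma lemA (C : Set E2) (hC : IsPreconnected C) (x : E2) (hx : x ∈ closure C)
    (r : ℝ) (hr : 0 < r) (h : ¬ C ⊆ ball x r) :
    ENNReal.ofReal r ≤ μH[1] (C ∩ closedBall x r) := by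
  apply ENNReal.le_of_forall_pos_le_add
  intro ε hε _
  rcases lt_or_ge r ε with hre | hre
  · calc ENNReal.ofReal r ≤ ENNReal.ofReal ε := ENNReal.ofReal_le_ofReal hre.le
    _ ≤ _ := by
        rw [ENNReal.ofReal_coe_nnreal] at *
        exact le_add_self
  · -- main case
    obtain ⟨c, hcC, hcx⟩ : ∃ c ∈ C, dist x c < ε := by
      rw [Metric.mem_closure_iff] at hx
      exact hx ε hε
    obtain ⟨z, hzC, hzx⟩ : ∃ z ∈ C, r ≤ dist x z := by
      rw [Set.not_subset] at h
      obtain ⟨z, hz, hz2⟩ := h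
      exact ⟨z, hz, le_of_not_gt (by simpa [Metric.mem_ball, dist_comm] using hz2)⟩
    set f : E2 → ℝ := fun y => dist x y with hf
    have hfc : Continuous f := Continuous.dist continuous_const continuous_id
    have himg : IsPreconnected (f '' C) := hC.image f hfc.continuousOn
    have hIcc : Icc (ε : ℝ) r ⊆ f '' C := by
      have := himg.Icc_subset (Set.mem_image_of_mem f hcC) (Set.mem_image_of_mem f hzC)
      intro t ht
      exact this ⟨le_trans hcx.le ht.1, le_trans ht.2 hzx⟩
    have hIcc2 : Icc (ε : ℝ) r ⊆ f '' (C ∩ closedBall x r) := by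
      intro t ht
      obtain ⟨y, hyC, hyt⟩ := hIcc ht
      refine ⟨y, ⟨hyC, ?_⟩, hyt⟩
      rw [Metric.mem_closedBall, dist_comm]
      rw [hf] at hyt
      simp only at hyt
      rw [hyt]
      exact ht.2
    have hlip : LipschitzWith 1 f := LipschitzWith.dist_right x
    have h1 : μH[1] (f '' (C ∩ closedBall x r)) ≤ μH[1] (C ∩ closedBall x r) := by
      simpa using hlip.hausdorffMeasure_image_le (le_of_lt one_pos) (C ∩ closedBall x r)
    have h2 : ENNReal.ofReal (r - ε) ≤ μH[1] (f '' (C ∩ closedBall x r)) := by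
      calc ENNReal.ofReal (r - ε) = μH[1] (Icc (ε:ℝ) r) := by
            rw [hausdorffMeasure_real, Real.volume_Icc]
      _ ≤ _ := measure_mono hIcc2
    calc ENNReal.ofReal r = ENNReal.ofReal (r - ε) + ENNReal.ofReal (ε:ℝ) := by
          rw [← ENNReal.ofReal_add (by linarith) (NNReal.coe_nonneg ε)]
          norm_num
    _ ≤ μH[1] (C ∩ closedBall x r) + (ε : ENNReal) := by
          gcongr
          · exact le_trans h2 h1
          · rw [ENNReal.ofReal_coe_nnreal]


lemma lemB_claim (ν : Measure E2) [IsFiniteMeasure ν] (A U : Set E2) (hU : IsOpen U)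
    (hAU : A ⊆ U) (R₀ : ℝ) (hR₀ : 0 < R₀)
    (hd : ∀ x ∈ A, ∀ r : ℝ, 0 < r → r < R₀ → ENNReal.ofReal r ≤ ν (closedBall x r))
    (d : ℝ) (hd0 : 0 < d) (hdR : d < R₀) :
    ∃ (s : Set E2) (rr : E2 → ℝ),
      s.Countable ∧
      (∀ b ∈ s, EMetric.diam (closedBall b (4 * rr b)) ≤ ENNReal.ofReal (8 * d)) ∧
      (A ⊆ ⋃ b ∈ s, closedBall b (4 * rr b)) ∧
      (∑' b : s, EMetric.diam (closedBall (b : E2) (4 * rr (b : E2))) ≤ 8 * ν U) := by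
  -- choose radii
  have hex : ∀ a : ↥A, ∃ ρ : ℝ, 0 < ρ ∧ ρ ≤ d ∧ closedBall (a : E2) ρ ⊆ U := by
    intro a
    obtain ⟨ε, hε, hball⟩ := Metric.isOpen_iff.1 hU a (hAU a.2)
    refine ⟨min d (ε / 2), by positivity, min_le_left _ _, ?_⟩
    refine subset_trans ?_ hball
    intro y hy
    rw [mem_closedBall] at hy
    rw [mem_ball]
    calc dist y (a : E2) ≤ min d (ε / 2) := hy
    _ ≤ ε / 2 := min_le_right _ _
    _ < ε := by linarith
  choose ρ hρ0 hρd hρU using hex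
  obtain ⟨u, -, hdisj, hcov⟩ :=
    Vitali.exists_disjoint_subfamily_covering_enlargement_closedBall (univ : Set ↥A)
      (fun a => (a : E2)) ρ d (fun a _ => hρd a) 4 (by norm_num)
  -- density at ρ a
  have hdens : ∀ a : ↥A, ENNReal.ofReal (ρ a) ≤ ν (closedBall (a : E2) (ρ a)) := fun a =>
    hd a a.2 (ρ a) (hρ0 a) (lt_of_le_of_lt (hρd a) hdR)
  -- countability of u
  have hcu : u.Countable := by
    have key := MeasureTheory.Measure.countable_meas_pos_of_disjoint_iUnion (μ := ν)
      (As := fun b : ↥u => closedBall ((b : ↥A) : E2) (ρ b))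
      (fun b => measurableSet_closedBall)
      (fun i j hij => hdisj i.2 j.2 (fun h => hij (Subtype.coe_injective h)))
    have huniv : {i : ↥u | 0 < ν (closedBall ((i : ↥A) : E2) (ρ i))} = univ := by
      ext i
      simp only [mem_setOf_eq, mem_univ, iff_true]
      exact lt_of_lt_of_le (by simp [ENNReal.ofReal_pos.2 (hρ0 i)]) (hdens i)
    rw [huniv, Set.countable_univ_iff] at key
    rw [← Set.countable_coe_iff]
    exact key
  classical
  set rr : E2 → ℝ := fun x => if h : x ∈ A then ρ ⟨x, h⟩ else 0 with hrr
  have hrrA : ∀ a : ↥A, rr (a : E2) = ρ a := by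
    intro a
    simp only [hrr, a.2, dif_pos]
  set s : Set E2 := (fun a : ↥A => (a : E2)) '' u with hs
  have hmem : ∀ b ∈ s, ∃ a : ↥A, a ∈ u ∧ (a : E2) = b := fun b hb => by
    obtain ⟨a, ha, rfl⟩ := hb; exact ⟨a, ha, rfl⟩
  refine ⟨s, rr, hcu.image _, ?_, ?_, ?_⟩
  · intro b hb
    obtain ⟨a, ha, rfl⟩ := hmem b hb
    rw [hrrA a]
    calc EMetric.diam (closedBall ((a : E2)) (4 * ρ a))
        ≤ 2 * ENNReal.ofReal (4 * ρ a) := by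
          have h0 := hρ0 a
          rw [← Metric.emetric_closedBall (by positivity)]
          exact EMetric.diam_closedBall
    _ = ENNReal.ofReal (8 * d) * ENNReal.ofReal ((ρ a) / d) := by
          rw [← ENNReal.ofReal_mul (by positivity), ← ENNReal.ofReal_ofNat,
            ← ENNReal.ofReal_mul (by norm_num)]
          congr 1
          field_simp
          ring
    _ ≤ ENNReal.ofReal (8 * d) * 1 := by
          gcongr
          rw [ENNReal.ofReal_le_one]
          exact div_le_one_of_le₀ (hρd a) hd0.le
    _ = ENNReal.ofReal (8 * d) := mul_one _
  · intro x hx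
    obtain ⟨b, hbu, hsub⟩ := hcov ⟨x, hx⟩ (mem_univ _)
    have hxmem : x ∈ closedBall ((b : ↥A) : E2) (4 * ρ b) :=
      hsub (mem_closedBall_self (hρ0 _).le)
    refine Set.mem_biUnion (Set.mem_image_of_mem _ hbu) ?_
    rwa [hrrA]
  · -- sum bound
    have hinj : Set.InjOn (fun a : ↥A => (a : E2)) u := fun a _ b _ h => Subtype.coe_injective h
    -- rewrite tsum over s as tsum over u
    have hcalc : ∑' b : s, EMetric.diam (closedBall (b : E2) (4 * rr (b : E2)))
        ≤ ∑' b : s, ENNReal.ofReal 8 * ν (closedBall (b : E2) (rr (b : E2))) := by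
      apply ENNReal.tsum_le_tsum
      intro b
      obtain ⟨a, ha, hab⟩ := hmem b b.2
      have hb' : rr (b : E2) = ρ a := by rw [← hab, hrrA]
      calc EMetric.diam (closedBall (b : E2) (4 * rr (b : E2)))
          ≤ 2 * ENNReal.ofReal (4 * rr (b : E2)) := by
            have h0 := hρ0 a
            rw [← Metric.emetric_closedBall (by rw [hb']; positivity)]
            exact EMetric.diam_closedBall
      _ = ENNReal.ofReal 8 * ENNReal.ofReal (rr (b : E2)) := by
            rw [← ENNReal.ofReal_ofNat 2, ← ENNReal.ofReal_mul (by norm_num),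
              ← ENNReal.ofReal_mul (by norm_num)]
            ring_nf
      _ ≤ ENNReal.ofReal 8 * ν (closedBall (b : E2) (rr (b : E2))) := by
            gcongr
            rw [hb', ← hab]
            exact hdens a
    refine le_trans hcalc ?_
    rw [ENNReal.tsum_mul_left]
    have hdisj' : s.PairwiseDisjoint (fun b => closedBall b (rr b)) := by
      intro b hb c hc hbc
      obtain ⟨a1, ha1, rfl⟩ := hmem b hb
      obtain ⟨a2, ha2, rfl⟩ := hmem c hc
      have hne : a1 ≠ a2 := fun h => hbc (by rw [h])
      have hd2 := hdisj ha1 ha2 hne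
      simp only [Function.onFun] at hd2 ⊢
      rw [hrrA, hrrA]
      exact hd2
    have hsum : ∑' b : s, ν (closedBall (b : E2) (rr (b : E2)))
        = ν (⋃ b ∈ s, closedBall b (rr b)) :=
      (measure_biUnion (hcu.image _) hdisj' (fun b _ => measurableSet_closedBall)).symm
    rw [hsum]
    have hsubU : (⋃ b ∈ s, closedBall b (rr b)) ⊆ U := by
      refine Set.iUnion₂_subset ?_
      intro b hb
      obtain ⟨a, ha, rfl⟩ := hmem b hb
      rw [hrrA]
      exact hρU a
    calc ENNReal.ofReal 8 * ν (⋃ b ∈ s, closedBall b (rr b))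
        ≤ ENNReal.ofReal 8 * ν U := mul_le_mul_right (measure_mono hsubU) _
    _ = 8 * ν U := by rw [ENNReal.ofReal_ofNat]


lemma lemB (ν : Measure E2) [IsFiniteMeasure ν] (A U : Set E2) (hU : IsOpen U)
    (hAU : A ⊆ U) (R₀ : ℝ) (hR₀ : 0 < R₀)
    (hd : ∀ x ∈ A, ∀ r : ℝ, 0 < r → r < R₀ → ENNReal.ofReal r ≤ ν (closedBall x r)) :
    μH[1] A ≤ 8 * ν U := by
  set δ : ℕ → ℝ := fun n => min (R₀ / 2) (1 / (n + 1)) with hδ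
  have hδ0 : ∀ n, 0 < δ n := fun n => lt_min (by linarith) (by positivity)
  have hδR : ∀ n, δ n < R₀ := fun n => lt_of_le_of_lt (min_le_left _ _) (by linarith)
  have H : ∀ n : ℕ, ∃ (s : Set E2) (rr : E2 → ℝ),
      s.Countable ∧
      (∀ b ∈ s, EMetric.diam (closedBall b (4 * rr b)) ≤ ENNReal.ofReal (8 * δ n)) ∧
      (A ⊆ ⋃ b ∈ s, closedBall b (4 * rr b)) ∧
      (∑' b : s, EMetric.diam (closedBall (b : E2) (4 * rr (b : E2))) ≤ 8 * ν U) :=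
    fun n => lemB_claim ν A U hU hAU R₀ hR₀ hd (δ n) (hδ0 n) (hδR n)
  choose s rr hcount hdiam hcov hsum using H
  haveI : ∀ n, Countable ↥(s n) := fun n => (hcount n).to_subtype
  have key := MeasureTheory.Measure.hausdorffMeasure_le_liminf_tsum (X := E2) 1 A
    (l := atTop) (fun n : ℕ => ENNReal.ofReal (8 * δ n))
    ?_ (fun n (b : ↥(s n)) => closedBall (b : E2) (4 * rr n (b : E2)))
    (Eventually.of_forall fun n => fun b : ↥(s n) => hdiam n b b.2)
    (Eventually.of_forall fun n => by
      intro x hx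
      obtain ⟨b, hb, hxb⟩ := Set.mem_iUnion₂.1 (hcov n hx)
      exact Set.mem_iUnion.2 ⟨⟨b, hb⟩, hxb⟩)
  · refine le_trans key ?_
    have : ∀ n : ℕ, (∑' b : ↥(s n),
        EMetric.diam (closedBall (b : E2) (4 * rr n (b : E2))) ^ (1 : ℝ)) ≤ 8 * ν U := by
      intro n
      simpa [ENNReal.rpow_one] using hsum n
    calc liminf (fun n => ∑' b : ↥(s n),
          EMetric.diam (closedBall (b : E2) (4 * rr n (b : E2))) ^ (1 : ℝ)) atTop
        ≤ liminf (fun _ : ℕ => (8 : ℝ≥0∞) * ν U) atTop :=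
          liminf_le_liminf (Eventually.of_forall this)
    _ = 8 * ν U := liminf_const _
  · -- tendsto
    rw [show (0 : ℝ≥0∞) = ENNReal.ofReal 0 by simp]
    apply ENNReal.tendsto_ofReal
    have h1 : Tendsto (fun n : ℕ => (1 : ℝ) / (n + 1)) atTop (nhds 0) :=
      tendsto_one_div_add_atTop_nhds_zero_nat
    have h2 : Tendsto (fun n : ℕ => δ n) atTop (nhds 0) := by
      apply squeeze_zero (fun n => (hδ0 n).le) (fun n => min_le_right _ _) h1
    simpa using h2.const_mul 8


/-- For every connected subset `C` of `ℝ²`, the one-dimensional Hausdorff measure of the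
closure of `C` equals that of `C`. -/
theorem hausdorff_measure_closure_of_connected (C : Set E2) (hC : IsConnected C) :
    μH[1] (closure C) = μH[1] C := by
  refine le_antisymm ?_ (measure_mono subset_closure)
  by_cases hfin : μH[1] C = ∞
  · rw [hfin]; exact le_top
  by_cases hsing : C.Subsingleton
  · obtain ⟨a, ha⟩ := hC.nonempty
    have : C = {a} := hsing.eq_singleton_of_mem ha
    rw [this, closure_singleton]
  · rw [Set.not_subsingleton_iff] at hsing
    obtain ⟨a, haC, b, hbC, hab⟩ := hsing
    set R₀ : ℝ := dist a b / 2 with hR₀def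
    have hR₀ : 0 < R₀ := by
      have := dist_pos.2 hab
      positivity
    set B : Set E2 := toMeasurable μH[1] C with hBdef
    have hCB : C ⊆ B := subset_toMeasurable _ _
    have hBmeas : MeasurableSet B := measurableSet_toMeasurable _ _
    have hBC : μH[1] B = μH[1] C := measure_toMeasurable _
    set ν : Measure E2 := μH[1].restrict B with hνdef
    haveI : IsFiniteMeasure ν := by
      constructor
      rw [hνdef, Measure.restrict_apply_univ, hBC]
      exact lt_top_iff_ne_top.2 hfin
    set A : Set E2 := closure C \ B with hAdef
    have hdens : ∀ x ∈ A, ∀ r : ℝ, 0 < r → r < R₀ →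
        ENNReal.ofReal r ≤ ν (closedBall x r) := by
      intro x hx r hr hrR
      have hxcl : x ∈ closure C := hx.1
      have hnot : ¬ C ⊆ ball x r := by
        intro hsub
        have h1 := mem_ball.1 (hsub haC)
        have h2 := mem_ball.1 (hsub hbC)
        have h2' : dist x b < r := by rw [dist_comm]; exact h2
        have : dist a b < 2 * r := by
          calc dist a b ≤ dist a x + dist x b := dist_triangle _ _ _
          _ < r + r := by exact add_lt_add h1 h2'
          _ = 2 * r := by ring
        rw [hR₀def] at hrR
        linarith
      calc ENNReal.ofReal r ≤ μH[1] (C ∩ closedBall x r) :=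
            lemA C hC.isPreconnected x hxcl r hr hnot
      _ ≤ μH[1] (closedBall x r ∩ B) := by
            apply measure_mono
            intro y hy
            exact ⟨hy.2, hCB hy.1⟩
      _ = ν (closedBall x r) := (Measure.restrict_apply' hBmeas).symm
    have hA0 : μH[1] A = 0 := by
      have hle : ∀ ε : ℝ≥0∞, 0 < ε → μH[1] A ≤ 8 * ε := by
        intro ε hε
        have hνA : ν A = 0 := by
          rw [hνdef, Measure.restrict_apply' hBmeas]
          have : A ∩ B = ∅ := by
            rw [hAdef]
            ext y
            simp only [mem_inter_iff, mem_diff, mem_empty_iff_false, iff_false]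
            rintro ⟨⟨-, h1⟩, h2⟩
            exact h1 h2
          rw [this, measure_empty]
        obtain ⟨U, hAU, hUopen, hUlt⟩ :=
          Set.exists_isOpen_lt_of_lt A ε (by rw [hνA]; exact hε)
        calc μH[1] A ≤ 8 * ν U := lemB ν A U hUopen hAU R₀ hR₀ hdens
        _ ≤ 8 * ε := mul_le_mul_right hUlt.le _
      rw [← le_zero_iff]
      apply ENNReal.le_of_forall_pos_le_add
      intro ε hε _
      rw [zero_add]
      calc μH[1] A ≤ 8 * ((ε : ℝ≥0∞) / 8) := by
            apply hle
            apply ENNReal.div_pos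
            · exact_mod_cast hε.ne'
            · norm_num
      _ = (ε : ℝ≥0∞) := by
            rw [mul_comm]
            exact ENNReal.div_mul_cancel (by norm_num) (by norm_num)
    calc μH[1] (closure C) = μH[1] (closure C ∩ B) + μH[1] (closure C \ B) :=
          (measure_inter_add_diff _ hBmeas).symm
    _ ≤ μH[1] B + 0 := by
          rw [← hAdef, hA0]
          gcongr
          exact inter_subset_right
    _ = μH[1] C := by rw [add_zero, hBC]
end
end

section
/- Let C be a connected subset of ℝ² with more than one point. Then for every x in the closure of C and every ρ with 0 < ρ < diam(C)/2, one has ℋ¹(C ∩ B_ρ(x)) ≥ ρ, where B_ρ(x) is the open ball of centre x and radius ρ. -/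
/-!
The 1-Lipschitz map `y ↦ dist y x` does not increase `ℋ¹`. Since `C` is connected, its image
is an interval of `ℝ`; it contains values arbitrarily close to `0` (as `x ∈ closure C`) and a
value larger than `ρ` (as `diam C > 2ρ`). Hence the image of `C ∩ B_ρ(x)` contains `(0, ρ)`,
whose `ℋ¹`-measure is its length `ρ`.
-/

open MeasureTheory

noncomputable section

open Metric Set

section

variable {X : Type*}

theorem exists_lt_dist_of_ofReal_two_mul_lt_ediam [PseudoMetricSpace X] {C : Set X} (x : X)
    {ρ : ℝ} (hρ : ENNReal.ofReal (2 * ρ) < ediam C) : ∃ c ∈ C, ρ < dist c x := by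
  by_contra! hC
  refine hρ.not_ge (ediam_le fun a ha b hb => ?_)
  rw [edist_dist]
  refine ENNReal.ofReal_le_ofReal ?_
  linarith [dist_triangle_right a b x, hC a ha, hC b hb]

theorem IsPreconnected.Ioo_subset_image_dist_inter_ball [PseudoMetricSpace X] {C : Set X}
    (hC : IsPreconnected C) {x c : X} (hx : x ∈ closure C) (hc : c ∈ C) {ρ : ℝ}
    (hρ : ρ ≤ dist c x) : Ioo 0 ρ ⊆ (dist · x) '' (C ∩ ball x ρ) := by
  rintro t ⟨ht₀, htρ⟩
  obtain ⟨y, hy, hyx⟩ : ∃ y ∈ C, dist y x < t := by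
    obtain ⟨y, hy, hxy⟩ := Metric.mem_closure_iff.mp hx t ht₀
    exact ⟨y, hy, dist_comm x y ▸ hxy⟩
  have hconn : IsPreconnected ((dist · x) '' C) :=
    hC.image _ (continuous_id.dist continuous_const).continuousOn
  obtain ⟨z, hz, rfl⟩ := hconn.Icc_subset (mem_image_of_mem _ hy) (mem_image_of_mem _ hc)
    ⟨hyx.le, (htρ.trans_le hρ).le⟩
  exact ⟨z, ⟨hz, mem_ball.mpr htρ⟩, rfl⟩

theorem IsPreconnected.ofReal_le_hausdorffMeasure_inter_ball [MetricSpace X] [MeasurableSpace X]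
    [BorelSpace X] {C : Set X} (hC : IsPreconnected C) {x c : X} (hx : x ∈ closure C)
    (hc : c ∈ C) {ρ : ℝ} (hρ : ρ ≤ dist c x) :
    ENNReal.ofReal ρ ≤ μH[1] (C ∩ ball x ρ) :=
  calc ENNReal.ofReal ρ = μH[1] (Ioo (0 : ℝ) ρ) := by
        rw [hausdorffMeasure_real, Real.volume_Ioo, sub_zero]
    _ ≤ μH[1] ((dist · x) '' (C ∩ ball x ρ)) :=
        measure_mono (hC.Ioo_subset_image_dist_inter_ball hx hc hρ)
    _ ≤ μH[1] (C ∩ ball x ρ) := by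
        simpa using (LipschitzWith.dist_left x).hausdorffMeasure_image_le zero_le_one
          (C ∩ ball x ρ)

end

theorem hausdorff_measure_ball_lower_bound_general (C : Set E2) (hC : IsConnected C)
    (x : E2) (hx : x ∈ closure C)
    (ρ : ℝ) (hρ2 : ENNReal.ofReal (2 * ρ) < EMetric.diam C) :
    ENNReal.ofReal ρ ≤ μH[1] (C ∩ Metric.ball x ρ) := by
  obtain ⟨c, hc, hρc⟩ := exists_lt_dist_of_ofReal_two_mul_lt_ediam x hρ2
  exact hC.isPreconnected.ofReal_le_hausdorffMeasure_inter_ball hx hc hρc.le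

/-- If `C ⊆ ℝ²` is connected with more than one point, then for every `x` in the closure
of `C` and every `ρ` with `0 < ρ < diam(C)/2`, one has `ℋ¹(C ∩ B_ρ(x)) ≥ ρ`. -/
theorem hausdorff_measure_ball_lower_bound (C : Set E2) (hC : IsConnected C)
    (hC2 : C.Nontrivial) (x : E2) (hx : x ∈ closure C)
    (ρ : ℝ) (hρ : 0 < ρ) (hρ2 : ENNReal.ofReal (2 * ρ) < EMetric.diam C) :
    ENNReal.ofReal ρ ≤ μH[1] (C ∩ Metric.ball x ρ) :=
  hausdorff_measure_ball_lower_bound_general C hC x hx ρ hρ2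
end
end

section
/- Let Ω be a bounded connected open subset of ℝ² with Lipschitz boundary and let p ≥ 1 be an integer. Let H be a connected compact subset of Ω̄ and let (H_n) be a sequence of compact subsets of Ω̄, each with at most p connected components, converging to H in the Hausdorff metric. Then there exists a sequence (Ĥ_n) of connected compact subsets of Ω̄ such that Ĥ_n → H in the Hausdorff metric, H_n ⊆ Ĥ_n for every n, and ℋ¹(Ĥ_n \ H_n) → 0. -/
open MeasureTheory Filter Set
open scoped Classical

noncomputable section

/-- Distance from a point to a set, with the convention `dist(x, ∅) = diam Ω`. -/
def distIn (Ω : Set E2) (x : E2) (S : Set E2) : ℝ :=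
  if S = ∅ then Metric.diam Ω else Metric.infDist x S

/-- Hausdorff distance between subsets of `closure Ω`, with the conventions
`dist(x, ∅) = diam Ω` and `sup ∅ = 0`. -/
def hausDistIn (Ω K₁ K₂ : Set E2) : ℝ :=
  max (sSup ((fun x => distIn Ω x K₂) '' K₁)) (sSup ((fun x => distIn Ω x K₁) '' K₂))

/-- Convergence of a sequence of compact subsets of `closure Ω` in the Hausdorff metric. -/
def TendstoHausdorff (Ω : Set E2) (K : ℕ → Set E2) (L : Set E2) : Prop :=
  Filter.Tendsto (fun n => hausDistIn Ω (K n) L) Filter.atTop (nhds 0)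

/-- `K` has at most `m` connected components: it is the union of `m` preconnected sets. -/
def AtMostComponents (m : ℕ) (K : Set E2) : Prop :=
  ∃ C : Fin m → Set E2, (∀ i, IsPreconnected (C i)) ∧ K = ⋃ i, C i

/-- `x` is a point of the Lipschitz part of the boundary of `A`: near `x`, in suitable
orthogonal coordinates, `A` is the sub-graph of a Lipschitz function `Φ : (a,b) → (c,d)`
inside the rectangle `(a,b) × (c,d)` containing `x`. -/
def IsLipschitzBoundaryPoint (A : Set E2) (x : E2) : Prop :=
  x ∈ frontier A ∧
  ∃ (f : E2 ≃ₗᵢ[ℝ] E2) (a b c d : ℝ) (Φ : ℝ → ℝ) (L : NNReal),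
    LipschitzOnWith L Φ (Set.Ioo a b) ∧
    (∀ s ∈ Set.Ioo a b, Φ s ∈ Set.Ioo c d) ∧
    f x 0 ∈ Set.Ioo a b ∧ f x 1 ∈ Set.Ioo c d ∧
    A ∩ f ⁻¹' {y : E2 | y 0 ∈ Set.Ioo a b ∧ y 1 ∈ Set.Ioo c d} =
      f ⁻¹' {y : E2 | y 0 ∈ Set.Ioo a b ∧ y 1 ∈ Set.Ioo c d ∧ y 1 < Φ (y 0)}

/-- `A` has a Lipschitz boundary. -/
def HasLipschitzBoundary (A : Set E2) : Prop :=
  ∀ x ∈ frontier A, IsLipschitzBoundaryPoint A x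


/-!
Near a boundary point, in the Lipschitz chart, two points of `closure Ω` at distance `r` are joined
inside `closure Ω` by a "staple" of three segments of total length `O(r)`: down, across below the
graph, and up again. Together with segments inside balls contained in `Ω`, compactness of
`closure Ω` makes it quasiconvex at small scales, with a uniform constant `C`.

Since `Hₙ` is Hausdorff-close to the connected set `H`, any two parts covering `Hₙ` contain points
closer than `rₙ ≈ 2 d_H(Hₙ, H)`. So the at most `p` pieces of `Hₙ` can be absorbed one at a time
into a growing connected set, each through one short continuum; the result `Ĥₙ` lies in the
`p C rₙ`-neighbourhood of `Hₙ` and adds `ℋ¹`-measure at most `p C rₙ`.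
-/

open scoped ENNReal Topology
open Metric

theorem Filter.Eventually.exists_forall_and {ι α : Type*} {l : Filter ι} {Q R : ι → α → Prop}
    (hQ : ∀ i, ∃ a, Q i a) (hQR : ∀ᶠ i in l, ∃ a, Q i a ∧ R i a) :
    ∃ f : ι → α, (∀ i, Q i (f i)) ∧ ∀ᶠ i in l, R i (f i) := by
  choose g hg using hQ
  refine ⟨fun i => if h : ∃ a, Q i a ∧ R i a then h.choose else g i, fun i => ?_, ?_⟩
  · dsimp only
    split_ifs with h
    exacts [h.choose_spec.1, hg i]
  · filter_upwards [hQR] with i h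
    simpa [dif_pos h] using h.choose_spec.2

theorem Fin.iUnion_eq_union_iUnion_succAbove {α : Type*} {m : ℕ} (D : Fin (m + 1) → Set α)
    (j : Fin (m + 1)) : ⋃ i, D i = D j ∪ ⋃ i, D (j.succAbove i) := by
  ext w
  simp [Fin.exists_iff_succAbove j]

section EpsConnected

variable {X : Type*} [PseudoMetricSpace X] {ε δ : ℝ} {s t : Set X}

def IsEpsConnected (ε : ℝ) (s : Set X) : Prop :=
  ∀ u v : Set X, s ⊆ u ∪ v → (s ∩ u).Nonempty → (s ∩ v).Nonempty →
    ∃ x ∈ s ∩ u, ∃ y ∈ s ∩ v, dist x y < ε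

/-- The `δ`-thickenings of the two parts of `s` cover the preconnected set `t`, hence meet on it. -/
theorem IsPreconnected.isEpsConnected_of_hausdorffDist_lt (ht : IsPreconnected t)
    (hfin : hausdorffEDist s t ≠ ⊤) (hδ : hausdorffDist s t < δ) :
    IsEpsConnected (2 * δ) s := by
  rintro u v hsuv ⟨x, hxs, hxu⟩ ⟨y, hys, hyv⟩
  have hcover : t ⊆ thickening δ (s ∩ u) ∪ thickening δ (s ∩ v) := by
    intro w hw
    obtain ⟨z, hzs, hzw⟩ := exists_dist_lt_of_hausdorffDist_lt' hw hδ hfin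
    rw [dist_comm] at hzw
    rcases hsuv hzs with hzu | hzv
    · exact Or.inl (mem_thickening_iff.2 ⟨z, ⟨hzs, hzu⟩, hzw⟩)
    · exact Or.inr (mem_thickening_iff.2 ⟨z, ⟨hzs, hzv⟩, hzw⟩)
  have hmeets : ∀ z ∈ s, ∀ a : Set X, z ∈ a → (t ∩ thickening δ (s ∩ a)).Nonempty := by
    intro z hzs a hza
    obtain ⟨w, hwt, hzw⟩ := exists_dist_lt_of_hausdorffDist_lt hzs hδ hfin
    exact ⟨w, hwt, mem_thickening_iff.2 ⟨z, ⟨hzs, hza⟩, by rwa [dist_comm]⟩⟩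
  obtain ⟨w, -, hwu, hwv⟩ := ht _ _ isOpen_thickening isOpen_thickening hcover
    (hmeets x hxs u hxu) (hmeets y hys v hyv)
  obtain ⟨x', hx', hwx'⟩ := mem_thickening_iff.1 hwu
  obtain ⟨y', hy', hwy'⟩ := mem_thickening_iff.1 hwv
  refine ⟨x', hx', y', hy', ?_⟩
  calc dist x' y' ≤ dist w x' + dist w y' := dist_triangle_left x' y' w
    _ < 2 * δ := by linarith

theorem IsPreconnected.isEpsConnected (hs : IsPreconnected s) (hε : 0 < ε) :
    IsEpsConnected ε s := by
  have h := hs.isEpsConnected_of_hausdorffDist_lt (s := s) (δ := ε / 2) (by simp)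
    (by simpa [hausdorffDist_self_zero])
  rwa [mul_div_cancel₀ ε two_ne_zero] at h

theorem IsEpsConnected.union (hs : IsEpsConnected ε s) (ht : IsEpsConnected ε t)
    (hst : (s ∩ t).Nonempty) : IsEpsConnected ε (s ∪ t) := by
  intro u v hcover hu hv
  obtain ⟨z, hzs, hzt⟩ := hst
  have hsuv : s ⊆ u ∪ v := subset_union_left.trans hcover
  have htuv : t ⊆ u ∪ v := subset_union_right.trans hcover
  have hside : ∀ a : Set X, ((s ∪ t) ∩ a).Nonempty → ¬(t ∩ a).Nonempty → (s ∩ a).Nonempty := by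
    rintro a ⟨w, hw | hw, hwa⟩ hta
    exacts [⟨w, hw, hwa⟩, (hta ⟨w, hw, hwa⟩).elim]
  have hs' : ∀ a : Set X, s ∩ a ⊆ (s ∪ t) ∩ a :=
    fun a => inter_subset_inter_left a subset_union_left
  have ht' : ∀ a : Set X, t ∩ a ⊆ (s ∪ t) ∩ a :=
    fun a => inter_subset_inter_left a subset_union_right
  by_cases htu : (t ∩ u).Nonempty
  · by_cases htv : (t ∩ v).Nonempty
    · obtain ⟨x, hx, y, hy, hxy⟩ := ht u v htuv htu htv
      exact ⟨x, ht' u hx, y, ht' v hy, hxy⟩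
    · obtain ⟨x, hx, y, hy, hxy⟩ := hs u v hsuv
        ⟨z, hzs, (htuv hzt).resolve_right fun hzv => htv ⟨z, hzt, hzv⟩⟩ (hside v hv htv)
      exact ⟨x, hs' u hx, y, hs' v hy, hxy⟩
  · obtain ⟨x, hx, y, hy, hxy⟩ := hs u v hsuv (hside u hu htu)
      ⟨z, hzs, (htuv hzt).resolve_left fun hzu => htu ⟨z, hzt, hzu⟩⟩
    exact ⟨x, hs' u hx, y, hs' v hy, hxy⟩

end EpsConnected

theorem hausdorffDist_le_add_of_subset_cthickening {X : Type*} [PseudoMetricSpace X]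
    {U K : Set X} {ρ : ℝ} (hρ : 0 ≤ ρ) (hUK : U ⊆ K) (hKU : K ⊆ cthickening ρ U) (T : Set X) :
    hausdorffDist K T ≤ ρ + hausdorffDist U T := by
  have hE : hausdorffEDist K U ≤ ENNReal.ofReal ρ := hausdorffEDist_le_of_infEDist
    (fun x hx => mem_cthickening_iff.1 (hKU hx))
    (fun x hx => (infEDist_zero_of_mem (hUK hx)).trans_le zero_le)
  calc hausdorffDist K T ≤ hausdorffDist K U + hausdorffDist U T :=
        hausdorffDist_triangle (ne_top_of_le_ne_top ENNReal.ofReal_ne_top hE)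
    _ ≤ ρ + hausdorffDist U T := by
        gcongr
        exact ENNReal.toReal_le_of_le_ofReal hρ hE

theorem measure_diff_le_diff_union_add {X : Type*} [MeasurableSpace X] (μ : Measure X)
    (K W V : Set X) : μ (K \ W) ≤ μ (K \ (W ∪ V)) + μ V :=
  (measure_mono (s := K \ W) (t := K \ (W ∪ V) ∪ V) fun w ⟨hwK, hwW⟩ => by
    by_cases hw : w ∈ V <;> simp_all).trans (measure_union_le _ _)

theorem cthickening_union_subset_of_subset_closedBall {X : Type*} [PseudoMetricSpace X]
    {W V : Set X} {x : X} {a c : ℝ} (hx : x ∈ W) (hV : V ⊆ closedBall x c) (ha : 0 ≤ a)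
    (hc : 0 ≤ c) : cthickening a (W ∪ V) ⊆ cthickening (a + c) W :=
  (cthickening_subset_of_subset a (union_subset (self_subset_cthickening W)
    (hV.trans (closedBall_subset_cthickening hx c)))).trans (cthickening_cthickening_subset ha hc W)

section ContinuumJoined

variable {X : Type*} [PseudoMetricSpace X] [MeasurableSpace X] {μ : Measure X} {S : Set X}
  {c c' r : ℝ} {x y z : X}

def ContinuumJoined (μ : Measure X) (S : Set X) (c : ℝ) (x y : X) : Prop :=
  ∃ K ⊆ S, IsCompact K ∧ IsPreconnected K ∧ x ∈ K ∧ y ∈ K ∧ μ K ≤ ENNReal.ofReal c ∧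
    K ⊆ closedBall x c

theorem ContinuumJoined.nonneg (h : ContinuumJoined μ S c x y) : 0 ≤ c := by
  obtain ⟨K, -, -, -, hxK, -, -, hKx⟩ := h
  simpa using hKx hxK

theorem ContinuumJoined.mono (h : ContinuumJoined μ S c x y) (hc : c ≤ c') :
    ContinuumJoined μ S c' x y := by
  obtain ⟨K, hKS, hKc, hKp, hxK, hyK, hμK, hKx⟩ := h
  exact ⟨K, hKS, hKc, hKp, hxK, hyK, hμK.trans (ENNReal.ofReal_le_ofReal hc),
    hKx.trans (closedBall_subset_closedBall hc)⟩

theorem ContinuumJoined.trans (h₁ : ContinuumJoined μ S c x y) (h₂ : ContinuumJoined μ S c' y z) :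
    ContinuumJoined μ S (c + c') x z := by
  have hc := h₁.nonneg
  have hc' := h₂.nonneg
  obtain ⟨K₁, hK₁S, hK₁c, hK₁p, hxK₁, hyK₁, hμK₁, hK₁x⟩ := h₁
  obtain ⟨K₂, hK₂S, hK₂c, hK₂p, hyK₂, hzK₂, hμK₂, hK₂y⟩ := h₂
  refine ⟨K₁ ∪ K₂, union_subset hK₁S hK₂S, hK₁c.union hK₂c, hK₁p.union y hyK₁ hyK₂ hK₂p,
    Or.inl hxK₁, Or.inr hzK₂, ?_, union_subset ?_ ?_⟩
  · calc μ (K₁ ∪ K₂) ≤ μ K₁ + μ K₂ := measure_union_le K₁ K₂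
      _ ≤ ENNReal.ofReal c + ENNReal.ofReal c' := add_le_add hμK₁ hμK₂
      _ = ENNReal.ofReal (c + c') := (ENNReal.ofReal_add hc hc').symm
  · exact hK₁x.trans (closedBall_subset_closedBall (by linarith))
  · exact hK₂y.trans (closedBall_subset_closedBall' (by linarith [mem_closedBall.1 (hK₁x hyK₁)]))

/-- Induction on the number of pieces: the core `K₀` absorbs, through a short continuum, a piece
lying within `r` of it. -/
theorem exists_isPreconnected_superset_union_iUnion (hr : 0 < r)
    (hjoin : ∀ x ∈ S, ∀ y ∈ S, dist x y < r → ContinuumJoined μ S c x y) {m : ℕ} {K₀ : Set X}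
    {D : Fin m → Set X} (hK₀ : IsPreconnected K₀) (hK₀ne : K₀.Nonempty)
    (hD : ∀ i, IsPreconnected (D i)) (hε : IsEpsConnected r (K₀ ∪ ⋃ i, D i))
    (hc : IsCompact (K₀ ∪ ⋃ i, D i)) (hS : K₀ ∪ ⋃ i, D i ⊆ S) :
    ∃ K ⊆ S, IsCompact K ∧ IsPreconnected K ∧ K₀ ∪ ⋃ i, D i ⊆ K ∧
      μ (K \ (K₀ ∪ ⋃ i, D i)) ≤ ENNReal.ofReal (m * c) ∧
      K ⊆ cthickening (m * c) (K₀ ∪ ⋃ i, D i) := by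
  induction m generalizing K₀ with
  | zero => exact ⟨_, hS, hc, by simpa using hK₀, subset_rfl, by simp, self_subset_cthickening _⟩
  | succ m ih =>
    set W := K₀ ∪ ⋃ i, D i
    by_cases hR : (⋃ i, D i).Nonempty
    swap
    · rw [not_nonempty_iff_eq_empty] at hR
      exact ⟨W, hS, hc, by simpa [W, hR] using hK₀, subset_rfl, by simp, self_subset_cthickening _⟩
    obtain ⟨x, ⟨hxW, hxK₀⟩, y, ⟨hyW, hyR⟩, hxy⟩ := hε K₀ (⋃ i, D i) subset_rfl
      (by rwa [union_inter_cancel_left]) (by rwa [union_inter_cancel_right])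
    obtain ⟨j, hyj⟩ := mem_iUnion.1 hyR
    have hK₁ := hjoin x (hS hxW) y (hS hyW) hxy
    have hc₀ : 0 ≤ c := hK₁.nonneg
    obtain ⟨K₁, hK₁S, hK₁c, hK₁p, hxK₁, hyK₁, hμK₁, hK₁x⟩ := hK₁
    have hW' : (K₀ ∪ K₁ ∪ D j) ∪ ⋃ i, D (j.succAbove i) = W ∪ K₁ := by
      simp only [W, Fin.iUnion_eq_union_iUnion_succAbove D j]
      ext
      simp only [mem_union]
      tauto
    obtain ⟨K, hKS, hKc, hKp, hWK, hμK, hKW⟩ := ih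
      ((hK₀.union x hxK₀ hxK₁ hK₁p).union y (Or.inr hyK₁) hyj (hD j))
      (hK₀ne.mono (subset_union_left.trans subset_union_left)) (fun i => hD _)
      (hW' ▸ hε.union (hK₁p.isEpsConnected hr) ⟨x, hxW, hxK₁⟩)
      (hW' ▸ hc.union hK₁c) (hW' ▸ union_subset hS hK₁S)
    rw [hW'] at hWK hμK hKW
    refine ⟨K, hKS, hKc, hKp, subset_union_left.trans hWK, ?_, ?_⟩
    · calc μ (K \ W) ≤ μ (K \ (W ∪ K₁)) + μ K₁ := measure_diff_le_diff_union_add μ K W K₁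
        _ ≤ ENNReal.ofReal (m * c) + ENNReal.ofReal c := add_le_add hμK hμK₁
        _ = ENNReal.ofReal ((m + 1 : ℕ) * c) := by
            rw [← ENNReal.ofReal_add (by positivity) hc₀]
            push_cast
            ring_nf
    · calc K ⊆ cthickening (m * c) (W ∪ K₁) := hKW
        _ ⊆ cthickening (m * c + c) W :=
            cthickening_union_subset_of_subset_closedBall hxW hK₁x (by positivity) hc₀
        _ = cthickening ((m + 1 : ℕ) * c) W := by push_cast; ring_nf

theorem IsEpsConnected.exists_isConnected_superset (hr : 0 < r)
    (hjoin : ∀ x ∈ S, ∀ y ∈ S, dist x y < r → ContinuumJoined μ S c x y) {U : Set X}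
    (hU : IsEpsConnected r U) (hUc : IsCompact U) (hUS : U ⊆ S) (hne : U.Nonempty) {m : ℕ}
    {D : Fin m → Set X} (hD : ∀ i, IsPreconnected (D i)) (hUD : U = ⋃ i, D i) :
    ∃ K ⊆ S, IsCompact K ∧ IsConnected K ∧ U ⊆ K ∧ μ (K \ U) ≤ ENNReal.ofReal (m * c) ∧
      K ⊆ cthickening (m * c) U := by
  obtain ⟨x, hx⟩ := hne
  have hxU : {x} ∪ ⋃ i, D i = U := by rw [← hUD, singleton_union, insert_eq_of_mem hx]
  obtain ⟨K, hKS, hKc, hKp, hUK, hμK, hKU⟩ := exists_isPreconnected_superset_union_iUnion hr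
    hjoin isPreconnected_singleton (singleton_nonempty x) hD (hxU ▸ hU) (hxU ▸ hUc) (hxU ▸ hUS)
  rw [hxU] at hUK hμK hKU
  exact ⟨K, hKS, hKc, ⟨⟨x, hUK hx⟩, hKp⟩, hUK, hμK, hKU⟩

theorem exists_isConnected_superset_of_hausdorffDist_lt {T U : Set X} {C δ δ₀ : ℝ} (hC : 0 ≤ C)
    (hjoin : ∀ x ∈ S, ∀ y ∈ S, dist x y < δ₀ → ContinuumJoined μ S (C * dist x y) x y)
    (hT : IsPreconnected T) (hfin : hausdorffEDist U T ≠ ⊤) (hUT : hausdorffDist U T < δ)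
    (hδ : 2 * δ < δ₀) (hUc : IsCompact U) (hUS : U ⊆ S) (hne : U.Nonempty) {m : ℕ}
    {D : Fin m → Set X} (hD : ∀ i, IsPreconnected (D i)) (hUD : U = ⋃ i, D i) :
    ∃ K ⊆ S, IsCompact K ∧ IsConnected K ∧ U ⊆ K ∧
      μ (K \ U) ≤ ENNReal.ofReal (m * (C * (2 * δ))) ∧ K ⊆ cthickening (m * (C * (2 * δ))) U :=
  (hT.isEpsConnected_of_hausdorffDist_lt hfin hUT).exists_isConnected_superset
    (by linarith [hausdorffDist_nonneg (s := U) (t := T)])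
    (fun x hx y hy hxy => (hjoin x hx y hy (hxy.trans hδ)).mono (by gcongr))
    hUc hUS hne hD hUD

theorem exists_isConnected_supersets_of_tendsto_hausdorffDist (hSc : IsCompact S)
    (hSconn : IsConnected S) {C δ₀ : ℝ} (hC : 0 ≤ C) (hδ₀ : 0 < δ₀)
    (hjoin : ∀ x ∈ S, ∀ y ∈ S, dist x y < δ₀ → ContinuumJoined μ S (C * dist x y) x y) {p : ℕ}
    {H : ℕ → Set X} {T : Set X} (hHc : ∀ n, IsCompact (H n)) (hHS : ∀ n, H n ⊆ S)
    (hHp : ∀ n, ∃ D : Fin p → Set X, (∀ i, IsPreconnected (D i)) ∧ H n = ⋃ i, D i)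
    (hT : IsConnected T) (hTS : T ⊆ S) (hne : ∀ᶠ n in atTop, (H n).Nonempty)
    (hd : Tendsto (fun n => hausdorffDist (H n) T) atTop (𝓝 0)) :
    ∃ Hh : ℕ → Set X, (∀ n, Hh n ⊆ S ∧ IsCompact (Hh n) ∧ IsConnected (Hh n) ∧ H n ⊆ Hh n) ∧
      Tendsto (fun n => hausdorffDist (Hh n) T) atTop (𝓝 0) ∧
      Tendsto (fun n => μ (Hh n \ H n)) atTop (𝓝 0) := by
  set δ : ℕ → ℝ := fun n => hausdorffDist (H n) T + 1 / (n + 1)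
  have hHδ : ∀ n, hausdorffDist (H n) T < δ n := fun n =>
    lt_add_of_pos_right _ Nat.one_div_pos_of_nat
  have hδ : Tendsto (fun n => 2 * δ n) atTop (𝓝 0) := by
    simpa [δ] using (hd.add tendsto_one_div_add_atTop_nhds_zero_nat).const_mul 2
  set ρ : ℕ → ℝ := fun n => p * (C * (2 * δ n))
  have hρ : Tendsto ρ atTop (𝓝 0) := by simpa using (hδ.const_mul C).const_mul (p : ℝ)
  have hρ₀ : ∀ n, 0 ≤ ρ n := fun n => by
    have := hausdorffDist_nonneg.trans_lt (hHδ n)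
    positivity
  obtain ⟨Hh, hHh, hHhρ⟩ := Eventually.exists_forall_and
    (Q := fun n K => K ⊆ S ∧ IsCompact K ∧ IsConnected K ∧ H n ⊆ K)
    (R := fun n K => μ (K \ H n) ≤ ENNReal.ofReal (ρ n) ∧ K ⊆ cthickening (ρ n) (H n))
    (fun n => ⟨S, subset_rfl, hSc, hSconn, hHS n⟩) <| by
      filter_upwards [hne, hδ.eventually_lt_const hδ₀] with n hn hδn
      obtain ⟨D, hD, hHD⟩ := hHp n
      obtain ⟨K, hKS, hKc, hKconn, hHK, hKρ⟩ := exists_isConnected_superset_of_hausdorffDist_lt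
        hC hjoin hT.isPreconnected (hausdorffEDist_ne_top_of_nonempty_of_bounded hn hT.nonempty
          (hSc.isBounded.subset (hHS n)) (hSc.isBounded.subset hTS))
        (hHδ n) hδn (hHc n) (hHS n) hn hD hHD
      exact ⟨K, ⟨hKS, hKc, hKconn, hHK⟩, hKρ⟩
  refine ⟨Hh, hHh, squeeze_zero' (Eventually.of_forall fun n => hausdorffDist_nonneg) ?_
    (by simpa using hρ.add hd), tendsto_of_tendsto_of_tendsto_of_le_of_le' tendsto_const_nhds
    (by simpa using ENNReal.tendsto_ofReal hρ) (Eventually.of_forall fun _ => zero_le) ?_⟩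
  · filter_upwards [hHhρ] with n hn
    exact hausdorffDist_le_add_of_subset_cthickening (hρ₀ n) (hHh n).2.2.2 hn.2 T
  · filter_upwards [hHhρ] with n hn using hn.1

end ContinuumJoined

theorem ContinuumJoined.preimage_isometryEquiv {X Y : Type*} [MetricSpace X] [MetricSpace Y]
    [MeasurableSpace X] [MeasurableSpace Y] [BorelSpace X] [BorelSpace Y] {d c : ℝ} {x y : X}
    (e : X ≃ᵢ Y) {S : Set Y} (h : ContinuumJoined μH[d] (e ⁻¹' S) c x y) :
    ContinuumJoined μH[d] S c (e x) (e y) := by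
  obtain ⟨K, hKS, hKc, hKp, hxK, hyK, hμK, hKx⟩ := h
  refine ⟨e '' K, image_subset_iff.2 hKS, hKc.image e.continuous,
    hKp.image _ e.continuous.continuousOn, mem_image_of_mem e hxK, mem_image_of_mem e hyK, ?_, ?_⟩
  · rwa [e.hausdorffMeasure_image]
  · rw [← e.image_closedBall]
    exact image_mono hKx

theorem continuumJoined_of_segment_subset {E : Type*} [NormedAddCommGroup E] [NormedSpace ℝ E]
    [MeasurableSpace E] [BorelSpace E] {S : Set E} {x y : E} (h : segment ℝ x y ⊆ S) :
    ContinuumJoined μH[1] S (dist x y) x y := by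
  refine ⟨segment ℝ x y, h, ?_, (convex_segment x y).isPreconnected, left_mem_segment ℝ x y,
    right_mem_segment ℝ x y, by rw [hausdorffMeasure_segment, edist_dist],
    (convex_closedBall x _).segment_subset (mem_closedBall_self dist_nonneg)
      (by rw [mem_closedBall, dist_comm])⟩
  rw [segment_eq_image_lineMap]
  exact isCompact_Icc.image AffineMap.lineMap_continuous

/-- Take the largest constant over a finite subcover, and a Lebesgue number of that subcover. -/
theorem IsCompact.exists_uniform_of_forall_local {X : Type*} [PseudoMetricSpace X] {S : Set X}
    (hS : IsCompact S) {P : ℝ → X → X → Prop}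
    (hP : ∀ {C C' x y}, C ≤ C' → P C x y → P C' x y)
    (hloc : ∀ z ∈ S, ∃ ρ > 0, ∃ C, ∀ x ∈ S, ∀ y ∈ S, dist x z < ρ → dist y z < ρ → P C x y) :
    ∃ C ≥ 0, ∃ δ > 0, ∀ x ∈ S, ∀ y ∈ S, dist x y < δ → P C x y := by
  choose! ρ hρ C hC using hloc
  obtain ⟨t, htS, hcover⟩ :=
    hS.elim_nhds_subcover (fun z => ball z (ρ z)) fun z hz => ball_mem_nhds z (hρ z hz)
  obtain ⟨M, hM⟩ := (t.finite_toSet.image C).bddAbove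
  obtain ⟨δ, hδ, hleb⟩ := lebesgue_number_lemma_of_metric hS (c := fun z : t => ball z.1 (ρ z))
    (fun _ => isOpen_ball) (by simpa [iUnion_subtype] using hcover)
  refine ⟨max M 0, le_max_right M 0, δ, hδ, fun x hx y hy hxy => ?_⟩
  obtain ⟨⟨z, hzt⟩, hball⟩ := hleb x hx
  exact hP ((hM (mem_image_of_mem C hzt)).trans (le_max_left M 0)) (hC z (htS z hzt) x hx y hy
    (hball (mem_ball_self hδ)) (hball (mem_ball_comm.1 hxy)))

section Plane

theorem abs_sub_apply_le_dist {ι : Type*} [Fintype ι] (u v : EuclideanSpace ℝ ι) (i : ι) :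
    |u i - v i| ≤ dist u v := by
  simpa [dist_eq_norm] using PiLp.norm_apply_le (u - v) i

theorem dist_le_abs_add_abs (u v : E2) : dist u v ≤ |u 0 - v 0| + |u 1 - v 1| := by
  rw [EuclideanSpace.dist_eq, Fin.sum_univ_two, Real.dist_eq, Real.dist_eq]
  refine Real.sqrt_le_iff.2 ⟨by positivity, ?_⟩
  nlinarith [sq_abs (u 0 - v 0), sq_abs (u 1 - v 1), abs_nonneg (u 0 - v 0),
    abs_nonneg (u 1 - v 1)]

theorem apply_mem_segment {ι : Type*} {u v w : EuclideanSpace ℝ ι} (hw : w ∈ segment ℝ u v)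
    (i : ι) : w i ∈ segment ℝ (u i) (v i) := by
  obtain ⟨α, β, hα, hβ, hαβ, rfl⟩ := hw
  exact ⟨α, β, hα, hβ, hαβ, by simp⟩

def IsSubgraphInRect (A : Set E2) (a b c d : ℝ) (Φ : ℝ → ℝ) : Prop :=
  A ∩ {y : E2 | y 0 ∈ Ioo a b ∧ y 1 ∈ Ioo c d} =
    {y : E2 | y 0 ∈ Ioo a b ∧ y 1 ∈ Ioo c d ∧ y 1 < Φ (y 0)}

variable {A : Set E2} {a b c d h : ℝ} {Φ : ℝ → ℝ}

theorem IsSubgraphInRect.mem_closure_iff (hA : IsSubgraphInRect A a b c d Φ)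
    (hΦ : ContinuousOn Φ (Ioo a b)) {w : E2} (hw0 : w 0 ∈ Ioo a b) (hw1 : w 1 ∈ Ioo c d) :
    w ∈ closure A ↔ w 1 ≤ Φ (w 0) := by
  have hcont : ∀ i : Fin 2, Continuous fun y : E2 => y i := fun i => by fun_prop
  constructor
  · intro hw
    by_contra! hlt
    have hΦw : Tendsto (fun y : E2 => Φ (y 0)) (𝓝 w) (𝓝 (Φ (w 0))) :=
      (hΦ.continuousAt (Ioo_mem_nhds hw0.1 hw0.2)).tendsto.comp ((hcont 0).tendsto w)
    have habove : {y : E2 | y 0 ∈ Ioo a b ∧ y 1 ∈ Ioo c d ∧ Φ (y 0) < y 1} ∈ 𝓝 w := by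
      filter_upwards [(hcont 0).continuousAt.preimage_mem_nhds (Ioo_mem_nhds hw0.1 hw0.2),
        (hcont 1).continuousAt.preimage_mem_nhds (Ioo_mem_nhds hw1.1 hw1.2),
        hΦw.eventually_lt ((hcont 1).tendsto w) hlt] with y h0 h1 h2 using ⟨h0, h1, h2⟩
    obtain ⟨u, ⟨hu0, hu1, hu⟩, huA⟩ := mem_closure_iff_nhds.1 hw _ habove
    have hu' : u ∈ A ∩ {y : E2 | y 0 ∈ Ioo a b ∧ y 1 ∈ Ioo c d} := ⟨huA, hu0, hu1⟩
    rw [hA] at hu'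
    exact hu'.2.2.not_gt hu
  · intro hle
    set e : E2 := EuclideanSpace.single 1 1
    have hlim : Tendsto (fun t : ℝ => w - t • e) (𝓝[>] 0) (𝓝 w) := by
      have hc : Continuous fun t : ℝ => w - t • e := by fun_prop
      simpa using (hc.tendsto 0).mono_left nhdsWithin_le_nhds
    refine mem_closure_of_tendsto hlim ?_
    filter_upwards [Ioo_mem_nhdsGT (sub_pos.2 hw1.1)] with t ⟨ht0, ht1⟩
    have hmem : w - t • e ∈ A ∩ {y : E2 | y 0 ∈ Ioo a b ∧ y 1 ∈ Ioo c d} := by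
      rw [hA]
      simp only [Fin.isValue, mem_Ioo, mem_ofPred_eq, PiLp.sub_apply, PiLp.smul_apply, ne_eq,
        zero_ne_one, not_false_eq_true, PiLp.single_eq_of_ne, smul_eq_mul, mul_zero, sub_zero,
        PiLp.single_eq_same, mul_one, e]
      exact ⟨hw0, ⟨by linarith, by linarith [hw1.2]⟩, by linarith⟩
    exact hmem.1

theorem IsSubgraphInRect.segment_vertical_subset (hA : IsSubgraphInRect A a b c d Φ)
    (hΦ : ContinuousOn Φ (Ioo a b)) {v : E2} (hv : v ∈ closure A) (hv0 : v 0 ∈ Ioo a b)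
    (hvd : v 1 < d) (hch : c < h) (hhv : h ≤ v 1) : segment ℝ v !₂[v 0, h] ⊆ closure A := by
  intro w hw
  have hw0 : w 0 = v 0 := by simpa using apply_mem_segment hw 0
  have hw1 : w 1 ∈ Icc h (v 1) := by
    simpa [segment_eq_uIcc, uIcc_of_ge hhv] using apply_mem_segment hw 1
  have hΦv := (hA.mem_closure_iff hΦ hv0 ⟨hch.trans_le hhv, hvd⟩).1 hv
  refine (hA.mem_closure_iff hΦ (hw0 ▸ hv0) ⟨hch.trans_le hw1.1, hw1.2.trans_lt hvd⟩).2 ?_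
  rw [hw0]
  linarith [hw1.2]

theorem IsSubgraphInRect.segment_horizontal_subset (hA : IsSubgraphInRect A a b c d Φ)
    (hΦ : ContinuousOn Φ (Ioo a b)) {s s' : ℝ} (hs : s ∈ Ioo a b) (hs' : s' ∈ Ioo a b)
    (hch : c < h) (hhd : h < d) (hhΦ : ∀ t ∈ uIcc s s', h ≤ Φ t) :
    segment ℝ !₂[s, h] !₂[s', h] ⊆ closure A := by
  intro w hw
  have hw1 : w 1 = h := by simpa using apply_mem_segment hw 1
  have hw0 : w 0 ∈ uIcc s s' := by simpa [segment_eq_uIcc] using apply_mem_segment hw 0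
  exact (hA.mem_closure_iff hΦ (ordConnected_Ioo.uIcc_subset hs hs' hw0)
    ⟨hw1 ▸ hch, hw1 ▸ hhd⟩).2 (hw1 ▸ hhΦ _ hw0)

/-- Go down from `x` to height `h`, across to the abscissa of `y`, and up to `y`; the choice of `h`
keeps the horizontal part below the graph of the `L`-Lipschitz `Φ`. -/
theorem IsSubgraphInRect.continuumJoined (hA : IsSubgraphInRect A a b c d Φ) {L : NNReal}
    (hΦ : LipschitzOnWith L Φ (Ioo a b)) {x y : E2} (hx : x ∈ closure A) (hy : y ∈ closure A)
    (hx0 : x 0 ∈ Ioo a b) (hy0 : y 0 ∈ Ioo a b) (hxd : x 1 < d) (hyd : y 1 < d)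
    (hc : c < min (x 1) (y 1) - (L + 1) * dist x y) :
    ContinuumJoined μH[1] (closure A) ((2 * L + 5) * dist x y) x y := by
  set r := dist x y
  set h := min (x 1) (y 1) - (L + 1) * r
  have hr : 0 ≤ r := dist_nonneg
  have hxy0 := abs_sub_apply_le_dist x y 0
  have hxy1 := abs_le.1 (abs_sub_apply_le_dist x y 1)
  have hxmin : x 1 - r ≤ min (x 1) (y 1) := le_min (by linarith) (by linarith)
  have hymin : y 1 - r ≤ min (x 1) (y 1) := le_min (by linarith) (by linarith)
  have hLr : 0 ≤ (L + 1) * r := by positivity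
  have hhx : h ≤ x 1 := by linarith [min_le_left (x 1) (y 1)]
  have hhy : h ≤ y 1 := by linarith [min_le_right (x 1) (y 1)]
  have hhΦ : ∀ t ∈ uIcc (x 0) (y 0), h ≤ Φ t := fun t ht => by
    have htx : |t - x 0| ≤ r :=
      (abs_sub_left_of_mem_uIcc ht).trans (by rwa [abs_sub_comm])
    have hLip : |Φ t - Φ (x 0)| ≤ L * r := by
      have := hΦ.dist_le_mul _ (ordConnected_Ioo.uIcc_subset hx0 hy0 ht) _ hx0
      rw [Real.dist_eq, Real.dist_eq] at this
      exact this.trans (by gcongr)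
    have hΦx := (hA.mem_closure_iff hΦ.continuousOn hx0 ⟨hc.trans_le hhx, hxd⟩).1 hx
    linarith [(abs_le.1 hLip).1, min_le_left (x 1) (y 1)]
  have hjoin := ((continuumJoined_of_segment_subset
    (hA.segment_vertical_subset hΦ.continuousOn hx hx0 hxd hc hhx)).trans
    (continuumJoined_of_segment_subset (hA.segment_horizontal_subset hΦ.continuousOn hx0 hy0 hc
      (hhx.trans_lt hxd) hhΦ))).trans
    (continuumJoined_of_segment_subset (segment_symm ℝ y !₂[y 0, h] ▸
      hA.segment_vertical_subset hΦ.continuousOn hy hy0 hyd hc hhy))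
  refine hjoin.mono ?_
  have hxP := dist_le_abs_add_abs x !₂[x 0, h]
  have hPQ := dist_le_abs_add_abs !₂[x 0, h] !₂[y 0, h]
  have hQy := dist_le_abs_add_abs !₂[y 0, h] y
  simp only [Fin.isValue, Matrix.cons_val_zero, Matrix.cons_val_one, Matrix.cons_val_fin_one,
    sub_self, abs_zero, zero_add, add_zero] at hxP hPQ hQy
  rw [abs_of_nonneg (sub_nonneg.2 hhx)] at hxP
  rw [abs_of_nonpos (sub_nonpos.2 hhy)] at hQy
  linarith

end Plane

theorem IsLipschitzBoundaryPoint.exists_continuumJoined {Ω : Set E2} {z : E2}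
    (hz : IsLipschitzBoundaryPoint Ω z) :
    ∃ ρ > 0, ∃ C, ∀ x ∈ closure Ω, ∀ y ∈ closure Ω, dist x z < ρ → dist y z < ρ →
      ContinuumJoined μH[1] (closure Ω) (C * dist x y) x y := by
  obtain ⟨-, f, a, b, c, d, Φ, L, hΦ, -, hz0, hz1, hΩf⟩ := hz
  set A := f.symm ⁻¹' Ω
  have hA : IsSubgraphInRect A a b c d Φ := by
    simpa [IsSubgraphInRect, A, preimage_preimage] using congrArg (f.symm ⁻¹' ·) hΩf
  have hclA : closure A = f.symm ⁻¹' closure Ω := (f.symm.toHomeomorph.preimage_closure Ω).symm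
  -- `ρ` keeps both points inside the chart with room `2 (L + 1) ρ` below them for the staple.
  set ρ := min (min (f z 0 - a) (b - f z 0)) (min (d - f z 1) ((f z 1 - c) / (2 * L + 3)))
  have hL : (0 : ℝ) < 2 * L + 3 := by positivity
  have hρ : 0 < ρ := lt_min (lt_min (by linarith [hz0.1]) (by linarith [hz0.2]))
    (lt_min (by linarith [hz1.2]) (div_pos (by linarith [hz1.1]) hL))
  have hρ₀ : ρ ≤ f z 0 - a ∧ ρ ≤ b - f z 0 :=
    ⟨(min_le_left _ _).trans (min_le_left _ _), (min_le_left _ _).trans (min_le_right _ _)⟩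
  have hρ₁ : ρ ≤ d - f z 1 := (min_le_right _ _).trans (min_le_left _ _)
  have hρc : (2 * L + 3) * ρ ≤ f z 1 - c := by
    rw [← le_div_iff₀' hL]
    exact (min_le_right _ _).trans (min_le_right _ _)
  have hcoord : ∀ v, dist v z < ρ → ∀ i, |f v i - f z i| < ρ := fun v hv i =>
    (abs_sub_apply_le_dist _ _ i).trans_lt (by rwa [f.dist_map])
  refine ⟨ρ, hρ, 2 * L + 5, fun x hx y hy hxz hyz => ?_⟩
  have hx0 := abs_lt.1 (hcoord x hxz 0)
  have hx1 := abs_lt.1 (hcoord x hxz 1)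
  have hy0 := abs_lt.1 (hcoord y hyz 0)
  have hy1 := abs_lt.1 (hcoord y hyz 1)
  have hr : (L + 1) * dist (f x) (f y) ≤ (L + 1) * (2 * ρ) := by
    rw [f.dist_map]
    gcongr
    linarith [dist_triangle_right x y z]
  have hmin : f z 1 - ρ < min (f x 1) (f y 1) := lt_min (by linarith) (by linarith)
  have key := hA.continuumJoined (x := f x) (y := f y) hΦ
    (by rwa [hclA, mem_preimage, f.symm_apply_apply])
    (by rwa [hclA, mem_preimage, f.symm_apply_apply])
    ⟨by linarith, by linarith⟩ ⟨by linarith, by linarith⟩ (by linarith) (by linarith)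
    (by linarith)
  rw [hclA, f.dist_map] at key
  simpa using key.preimage_isometryEquiv f.symm.toIsometryEquiv

theorem IsOpen.exists_continuumJoined {Ω : Set E2} (hΩ : IsOpen Ω) {z : E2} (hz : z ∈ Ω) :
    ∃ ρ > 0, ∃ C, ∀ x ∈ closure Ω, ∀ y ∈ closure Ω, dist x z < ρ → dist y z < ρ →
      ContinuumJoined μH[1] (closure Ω) (C * dist x y) x y := by
  obtain ⟨ρ, hρ, hball⟩ := Metric.isOpen_iff.1 hΩ z hz
  refine ⟨ρ, hρ, 1, fun x _ y _ hxz hyz => ?_⟩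
  rw [one_mul]
  exact continuumJoined_of_segment_subset
    (((convex_ball z ρ).segment_subset hxz hyz).trans (hball.trans subset_closure))

/-- Quasiconvexity of `closure Ω` at small scales. -/
theorem exists_continuumJoined_closure {Ω : Set E2} (hΩo : IsOpen Ω)
    (hΩb : Bornology.IsBounded Ω) (hΩlip : HasLipschitzBoundary Ω) :
    ∃ C ≥ 0, ∃ δ > 0, ∀ x ∈ closure Ω, ∀ y ∈ closure Ω, dist x y < δ →
      ContinuumJoined μH[1] (closure Ω) (C * dist x y) x y := by
  refine hΩb.isCompact_closure.exists_uniform_of_forall_local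
    (fun hC h => h.mono (mul_le_mul_of_nonneg_right hC dist_nonneg)) fun z hz => ?_
  by_cases hzΩ : z ∈ Ω
  · exact hΩo.exists_continuumJoined hzΩ
  · exact (hΩlip z ⟨hz, by rwa [hΩo.interior_eq]⟩).exists_continuumJoined

section HausDistIn

variable {Ω K₁ K₂ : Set E2}

theorem hausDistIn_eq_hausdorffDist (h₁ : K₁.Nonempty) (h₂ : K₂.Nonempty)
    (hb₁ : Bornology.IsBounded K₁) (hb₂ : Bornology.IsBounded K₂) :
    hausDistIn Ω K₁ K₂ = hausdorffDist K₁ K₂ := by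
  have hfin := hausdorffEDist_ne_top_of_nonempty_of_bounded h₁ h₂ hb₁ hb₂
  have hfin' : hausdorffEDist K₂ K₁ ≠ ⊤ := by rwa [hausdorffEDist_comm]
  have hdist : ∀ {L : Set E2}, L.Nonempty → (fun x => distIn Ω x L) = (infDist · L) :=
    fun hL => funext fun x => if_neg hL.ne_empty
  rw [hausDistIn, hdist h₁, hdist h₂]
  have hle₁ : ∀ x ∈ K₁, infDist x K₂ ≤ hausdorffDist K₁ K₂ :=
    fun x hx => infDist_le_hausdorffDist_of_mem hx hfin
  have hle₂ : ∀ y ∈ K₂, infDist y K₁ ≤ hausdorffDist K₁ K₂ := fun y hy => by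
    rw [hausdorffDist_comm]
    exact infDist_le_hausdorffDist_of_mem hy hfin'
  have hbdd₁ : BddAbove ((infDist · K₂) '' K₁) := ⟨_, forall_mem_image.2 hle₁⟩
  have hbdd₂ : BddAbove ((infDist · K₁) '' K₂) := ⟨_, forall_mem_image.2 hle₂⟩
  refine le_antisymm (max_le (csSup_le (h₁.image _) (forall_mem_image.2 hle₁))
    (csSup_le (h₂.image _) (forall_mem_image.2 hle₂))) ?_
  obtain ⟨x, hx⟩ := h₁
  exact hausdorffDist_le_of_infDist
    (le_max_of_le_left (le_csSup_of_le hbdd₁ (mem_image_of_mem _ hx) infDist_nonneg))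
    (fun x hx => le_max_of_le_left (le_csSup hbdd₁ (mem_image_of_mem _ hx)))
    (fun y hy => le_max_of_le_right (le_csSup hbdd₂ (mem_image_of_mem _ hy)))

theorem hausDistIn_empty_left (h₂ : K₂.Nonempty) : hausDistIn Ω ∅ K₂ = diam Ω := by
  simp [hausDistIn, distIn, h₂.image_const, diam_nonneg]

end HausDistIn

theorem TendstoHausdorff.eventually_nonempty {Ω : Set E2} (hΩo : IsOpen Ω)
    (hΩb : Bornology.IsBounded Ω) (hΩne : Ω.Nonempty) {H : ℕ → Set E2} {L : Set E2}
    (hL : L.Nonempty) (h : TendstoHausdorff Ω H L) : ∀ᶠ n in atTop, (H n).Nonempty := by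
  obtain ⟨z, hz⟩ := hΩne
  -- By the convention `dist(x, ∅) = diam Ω`, an empty `H n` is at distance `diam Ω > 0` from `L`.
  have hdiam : 0 < diam Ω := diam_pos (infinite_of_mem_nhds z (hΩo.mem_nhds hz)).nontrivial hΩb
  filter_upwards [h.eventually (gt_mem_nhds hdiam)] with n hn
  by_contra hempty
  rw [not_nonempty_iff_eq_empty.1 hempty, hausDistIn_empty_left hL] at hn
  exact hn.false

theorem tendstoHausdorff_iff {Ω : Set E2} (hΩb : Bornology.IsBounded Ω) {H : ℕ → Set E2}
    {L : Set E2} (hHs : ∀ n, H n ⊆ closure Ω) (hLs : L ⊆ closure Ω) (hL : L.Nonempty)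
    (hH : ∀ᶠ n in atTop, (H n).Nonempty) :
    TendstoHausdorff Ω H L ↔ Tendsto (fun n => hausdorffDist (H n) L) atTop (𝓝 0) :=
  tendsto_congr' <| by
    filter_upwards [hH] with n hn using hausDistIn_eq_hausdorffDist hn hL
      (hΩb.closure.subset (hHs n)) (hΩb.closure.subset hLs)

theorem connect_components_approx_general (Ω : Set E2) (hΩo : IsOpen Ω)
    (hΩb : Bornology.IsBounded Ω) (hΩconn : IsConnected Ω)
    (hΩlip : HasLipschitzBoundary Ω) (p : ℕ)
    (H : ℕ → Set E2) (hHc : ∀ n, IsCompact (H n)) (hHs : ∀ n, H n ⊆ closure Ω)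
    (hHp : ∀ n, AtMostComponents p (H n))
    (Hlim : Set E2) (hHlims : Hlim ⊆ closure Ω)
    (hHlimconn : IsConnected Hlim)
    (hconv : TendstoHausdorff Ω H Hlim) :
    ∃ Hh : ℕ → Set E2,
      (∀ n, IsCompact (Hh n)) ∧ (∀ n, IsConnected (Hh n)) ∧
      (∀ n, Hh n ⊆ closure Ω) ∧ (∀ n, H n ⊆ Hh n) ∧
      TendstoHausdorff Ω Hh Hlim ∧
      Filter.Tendsto (fun n => μH[1] (Hh n \ H n)) Filter.atTop (nhds 0) := by
  obtain ⟨C, hC, δ₀, hδ₀, hjoin⟩ := exists_continuumJoined_closure hΩo hΩb hΩlip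
  have hne := hconv.eventually_nonempty hΩo hΩb hΩconn.nonempty hHlimconn.nonempty
  obtain ⟨Hh, hHh, hHhlim, hμ⟩ := exists_isConnected_supersets_of_tendsto_hausdorffDist
    hΩb.isCompact_closure hΩconn.closure hC hδ₀ hjoin hHc hHs hHp hHlimconn hHlims hne
    ((tendstoHausdorff_iff hΩb hHs hHlims hHlimconn.nonempty hne).1 hconv)
  refine ⟨Hh, fun n => (hHh n).2.1, fun n => (hHh n).2.2.1, fun n => (hHh n).1,
    fun n => (hHh n).2.2.2, ?_, hμ⟩
  exact (tendstoHausdorff_iff hΩb (fun n => (hHh n).1) hHlims hHlimconn.nonempty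
    (hne.mono fun n hn => hn.mono (hHh n).2.2.2)).2 hHhlim

/-- If `H` is a connected compact subset of `closure Ω` and `Hₙ → H` in the Hausdorff metric,
where each `Hₙ` is compact with at most `p` connected components, then there are connected
compact sets `Ĥₙ ⊇ Hₙ` with `Ĥₙ → H` in the Hausdorff metric and `ℋ¹(Ĥₙ \ Hₙ) → 0`. -/
theorem connect_components_approx (Ω : Set E2) (hΩo : IsOpen Ω)
    (hΩb : Bornology.IsBounded Ω) (hΩconn : IsConnected Ω)
    (hΩlip : HasLipschitzBoundary Ω) (p : ℕ) (hp : 1 ≤ p)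
    (H : ℕ → Set E2) (hHc : ∀ n, IsCompact (H n)) (hHs : ∀ n, H n ⊆ closure Ω)
    (hHp : ∀ n, AtMostComponents p (H n))
    (Hlim : Set E2) (hHlimc : IsCompact Hlim) (hHlims : Hlim ⊆ closure Ω)
    (hHlimconn : IsConnected Hlim)
    (hconv : TendstoHausdorff Ω H Hlim) :
    ∃ Hh : ℕ → Set E2,
      (∀ n, IsCompact (Hh n)) ∧ (∀ n, IsConnected (Hh n)) ∧
      (∀ n, Hh n ⊆ closure Ω) ∧ (∀ n, H n ⊆ Hh n) ∧
      TendstoHausdorff Ω Hh Hlim ∧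
      Filter.Tendsto (fun n => μH[1] (Hh n \ H n)) Filter.atTop (nhds 0) :=
  connect_components_approx_general Ω hΩo hΩb hΩconn hΩlip p H hHc hHs hHp Hlim hHlims hHlimconn
    hconv
end
end

section
/- Let K be a connected compact subset of ℝ² with ℋ¹(K) < ∞, and let H be a nonempty compact subset of K having exactly p ≥ 2 connected components H¹, …, H^p. Then there exist a finite family of indices (σ_j)_{0 ≤ j ≤ ℓ} with {σ_0, …, σ_ℓ} = {1, …, p}, and a family (Γ_j)_{1 ≤ j ≤ ℓ} of connected components of K \ H, such that for each j = 1, …, ℓ the closure of Γ_j intersects both H^{σ_{j−1}} and H^{σ_j}. -/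
open MeasureTheory Filter Set

noncomputable section

def IsComponentOf (S C : Set E2) : Prop :=
  ∃ x ∈ S, C = connectedComponentIn S x

/-!
Split the components of `H` into two nonempty groups with unions `A` and `B`. By Zorn's lemma
`K` contains a continuum `L` meeting `A` and `B` that is minimal with this property. A proper
closed subset of `L` contains no continuum meeting both `A` and `B`, so by Šura-Bura it splits
into two disjoint closed pieces, one missing `A` and one missing `B`. If `L \ (A ∪ B)` were
disconnected by open sets `u`, `v`, then `L \ v` and `L \ u` would be two such proper subsets
meeting only in `A ∪ B`, and gluing their splittings would disconnect `L`; similarly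
connectedness of `L` forces the closure of `L \ (A ∪ B)` to meet `A` and `B`. So some component
of `K \ H` has closure meeting both groups: the graph on the components of `H` whose edges are
components of `K \ H` is connected, and a walk through all its vertices gives `σ` and `Γ`.
-/

open Function

section Separation

variable {X : Type*} [TopologicalSpace X]

def IsSeparatedBetween (F A B : Set X) : Prop :=
  ∃ F₁ F₂ : Set X, IsClosed F₁ ∧ IsClosed F₂ ∧ Disjoint F₁ F₂ ∧ F = F₁ ∪ F₂ ∧
    Disjoint F₁ B ∧ Disjoint F₂ A

variable {F G L A B : Set X}

theorem isSeparatedBetween_union (hA : IsClosed A) (hB : IsClosed B) (hAB : Disjoint A B) :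
    IsSeparatedBetween (A ∪ B) A B :=
  ⟨A, B, hA, hB, hAB, rfl, hAB, hAB.symm⟩

namespace IsSeparatedBetween

theorem of_disjoint (hF : IsClosed F) (hFA : Disjoint F A) : IsSeparatedBetween F A B :=
  ⟨∅, F, isClosed_empty, hF, Set.empty_disjoint F, (empty_union F).symm, Set.empty_disjoint B, hFA⟩

theorem union (hF : IsSeparatedBetween F A B) (hG : IsSeparatedBetween G A B)
    (hFG : F ∩ G ⊆ A ∪ B) : IsSeparatedBetween (F ∪ G) A B := by
  obtain ⟨F₁, F₂, hF₁, hF₂, hF, rfl, hF₁B, hF₂A⟩ := hF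
  obtain ⟨G₁, G₂, hG₁, hG₂, hG, rfl, hG₁B, hG₂A⟩ := hG
  refine ⟨F₁ ∪ G₁, F₂ ∪ G₂, hF₁.union hG₁, hF₂.union hG₂, ?_, union_union_union_comm _ _ _ _,
    hF₁B.union_left hG₁B, hF₂A.union_left hG₂A⟩
  refine (hF.union_right (Set.disjoint_left.2 fun x hxF hxG => ?_)).union_left
    ((Set.disjoint_left.2 fun x hxG hxF => ?_).union_right hG)
  · rcases hFG ⟨Or.inl hxF, Or.inr hxG⟩ with hxA | hxB
    exacts [Set.disjoint_left.1 hG₂A hxG hxA, Set.disjoint_left.1 hF₁B hxF hxB]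
  · rcases hFG ⟨Or.inr hxF, Or.inl hxG⟩ with hxA | hxB
    exacts [Set.disjoint_left.1 hF₂A hxF hxA, Set.disjoint_left.1 hG₁B hxG hxB]

theorem disjoint_of_isPreconnected (h : IsSeparatedBetween F A B) (hL : IsPreconnected L)
    (hLF : L ⊆ F) (hLA : (L ∩ A).Nonempty) : Disjoint L B := by
  obtain ⟨F₁, F₂, hF₁, hF₂, hF, rfl, hF₁B, hF₂A⟩ := h
  rcases isPreconnected_iff_subset_of_disjoint_closed.1 hL F₁ F₂ hF₁ hF₂ hLF
    (by rw [hF.inter_eq, inter_empty]) with hL₁ | hL₂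
  · exact hF₁B.mono_left hL₁
  · obtain ⟨x, hxL, hxA⟩ := hLA
    exact absurd hxA (Set.disjoint_left.1 hF₂A (hL₂ hxL))

end IsSeparatedBetween

theorem IsPreconnected.closure_diff_union_inter_nonempty (hL : IsPreconnected L)
    (hA : IsClosed A) (hB : IsClosed B) (hAB : Disjoint A B) (hLA : (L ∩ A).Nonempty)
    (hLB : (L ∩ B).Nonempty) : (closure (L \ (A ∪ B)) ∩ A).Nonempty := by
  by_contra! h
  have hsep := (IsSeparatedBetween.of_disjoint (B := B) isClosed_closure
    (Set.disjoint_iff_inter_eq_empty.2 h)).union (isSeparatedBetween_union hA hB hAB)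
    inter_subset_right
  refine Set.not_disjoint_iff_nonempty_inter.2 hLB (hsep.disjoint_of_isPreconnected hL ?_ hLA)
  intro x hx
  by_cases hxAB : x ∈ A ∪ B
  · exact .inr hxAB
  · exact .inl (subset_closure ⟨hx, hxAB⟩)

theorem exists_isClopen_superset_disjoint_of_connectedComponent [CompactSpace X] [T2Space X]
    (hA : IsClosed A) (hB : IsClosed B) (h : ∀ a ∈ A, Disjoint (connectedComponent a) B) :
    ∃ C, IsClopen C ∧ A ⊆ C ∧ Disjoint C B := by
  have hπ : Continuous (ConnectedComponents.mk : X → ConnectedComponents X) :=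
    ConnectedComponents.continuous_coe
  obtain ⟨C, hC, hAC, hCB⟩ := exists_clopen_of_closed_subset_open
    (hA.isCompact.image hπ).isClosed (hB.isCompact.image hπ).isClosed.isOpen_compl <| by
      rintro _ ⟨a, ha, rfl⟩ ⟨b, hb, hba⟩
      exact Set.disjoint_left.1 (h a ha) (ConnectedComponents.coe_eq_coe'.1 hba) hb
  exact ⟨_, hC.preimage hπ, image_subset_iff.1 hAC,
    Set.disjoint_left.2 fun x hxC hxB => hCB hxC (mem_image_of_mem _ hxB)⟩

theorem IsCompact.isSeparatedBetween [T2Space X] (hF : IsCompact F) (hA : IsClosed A)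
    (hB : IsClosed B) (h : ∀ S ⊆ F, IsPreconnected S → (S ∩ A).Nonempty → Disjoint S B) :
    IsSeparatedBetween F A B := by
  have : CompactSpace F := isCompact_iff_compactSpace.1 hF
  have hval : Continuous ((↑) : F → X) := continuous_subtype_val
  obtain ⟨C, hC, hAC, hCB⟩ := exists_isClopen_superset_disjoint_of_connectedComponent
    (hA.preimage hval) (hB.preimage hval) fun a ha => disjoint_image_left.1 <|
      h _ (image_subset_range _ _ |>.trans Subtype.range_coe.subset)
        (isPreconnected_connectedComponent.image _ hval.continuousOn)
        ⟨a, mem_image_of_mem _ mem_connectedComponent, ha⟩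
  have hclosed {D : Set F} (hD : IsClosed D) : IsClosed (((↑) : F → X) '' D) :=
    (hD.isCompact.image hval).isClosed
  refine ⟨_, _, hclosed hC.isClosed, hclosed hC.isOpen.isClosed_compl,
    (disjoint_image_iff Subtype.val_injective).2 disjoint_compl_right, ?_,
    disjoint_image_left.2 hCB, disjoint_image_left.2 (disjoint_compl_left.mono_right hAC)⟩
  rw [← image_union, union_compl_self, image_univ, Subtype.range_coe]

end Separation

section Continuum

variable {X : Type*} [TopologicalSpace X] [T2Space X]

theorem IsChain.exists_mem_subset_of_sInter_subset {c : Set (Set X)} (hc : IsChain (· ⊆ ·) c)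
    (hne : c.Nonempty) (hcpt : ∀ M ∈ c, IsCompact M) {U : Set X} (hU : IsOpen U)
    (hcU : ⋂₀ c ⊆ U) : ∃ M ∈ c, M ⊆ U := by
  have : Nonempty c := hne.to_subtype
  obtain ⟨⟨M, hM⟩, hMU⟩ := exists_subset_nhds_of_isCompact (V := fun M : c => (M : Set X))
    (fun M N => (hc.total M.2 N.2).elim (fun h => ⟨M, subset_rfl, h⟩)
      fun h => ⟨N, h, subset_rfl⟩) (fun M => hcpt M M.2)
    fun x hx => hU.mem_nhds (hcU (by rwa [sInter_eq_iInter]))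
  exact ⟨M, hM, hMU⟩

theorem IsChain.isPreconnected_sInter {c : Set (Set X)} (hc : IsChain (· ⊆ ·) c)
    (hne : c.Nonempty) (hcpt : ∀ M ∈ c, IsCompact M) (hconn : ∀ M ∈ c, IsPreconnected M) :
    IsPreconnected (⋂₀ c) := by
  obtain ⟨M₀, hM₀⟩ := hne
  have hT : IsCompact (⋂₀ c) := (hcpt M₀ hM₀).of_isClosed_subset
    (isClosed_sInter fun M hM => (hcpt M hM).isClosed) (sInter_subset_of_mem hM₀)
  rw [isPreconnected_iff_subset_of_fully_disjoint_closed hT.isClosed]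
  intro u v hu hv hTuv huv
  obtain ⟨U, V, hU, hV, huU, hvV, hUV⟩ := SeparatedNhds.of_isCompact_isCompact
    (hT.inter_right hu) (hT.inter_right hv) (huv.mono inter_subset_right inter_subset_right)
  obtain ⟨M, hM, hMUV⟩ := hc.exists_mem_subset_of_sInter_subset ⟨M₀, hM₀⟩ hcpt (hU.union hV)
    fun x hx => (hTuv hx).imp (fun hxu => huU ⟨hx, hxu⟩) fun hxv => hvV ⟨hx, hxv⟩
  have hTM : ⋂₀ c ⊆ M := sInter_subset_of_mem hM
  rcases isPreconnected_iff_subset_of_disjoint.1 (hconn M hM) U V hU hV hMUV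
    (by rw [hUV.inter_eq, inter_empty]) with hMU | hMV
  · exact .inl fun x hx => (hTuv hx).resolve_right fun hxv =>
      Set.disjoint_left.1 hUV (hMU (hTM hx)) (hvV ⟨hx, hxv⟩)
  · exact .inr fun x hx => (hTuv hx).resolve_left fun hxu =>
      Set.disjoint_left.1 hUV (huU ⟨hx, hxu⟩) (hMV (hTM hx))

theorem IsChain.sInter_inter_nonempty {c : Set (Set X)} (hc : IsChain (· ⊆ ·) c)
    (hne : c.Nonempty) (hcpt : ∀ M ∈ c, IsCompact M) {D : Set X} (hD : IsClosed D)
    (hcD : ∀ M ∈ c, (M ∩ D).Nonempty) : (⋂₀ c ∩ D).Nonempty := by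
  by_contra h
  obtain ⟨M, hM, hMD⟩ := hc.exists_mem_subset_of_sInter_subset hne hcpt hD.isOpen_compl
    fun x hx hxD => h ⟨x, hx, hxD⟩
  obtain ⟨x, hxM, hxD⟩ := hcD M hM
  exact hMD hxM hxD

def IsContinuumBetween (A B M : Set X) : Prop :=
  IsCompact M ∧ IsPreconnected M ∧ (M ∩ A).Nonempty ∧ (M ∩ B).Nonempty

variable {A B K L F : Set X}

theorem IsContinuumBetween.exists_minimal (hA : IsClosed A) (hB : IsClosed B)
    (hK : IsContinuumBetween A B K) : ∃ L ⊆ K, Minimal (IsContinuumBetween A B) L := by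
  refine zorn_superset_nonempty _ (fun c hc hchain hne => ⟨⋂₀ c, ?_, fun M => sInter_subset_of_mem⟩)
    K hK
  obtain ⟨M₀, hM₀⟩ := hne
  have hcpt : ∀ M ∈ c, IsCompact M := fun M hM => (hc hM).1
  exact ⟨(hcpt M₀ hM₀).of_isClosed_subset (isClosed_sInter fun M hM => (hcpt M hM).isClosed)
      (sInter_subset_of_mem hM₀),
    hchain.isPreconnected_sInter ⟨M₀, hM₀⟩ hcpt fun M hM => (hc hM).2.1,
    hchain.sInter_inter_nonempty ⟨M₀, hM₀⟩ hcpt hA fun M hM => (hc hM).2.2.1,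
    hchain.sInter_inter_nonempty ⟨M₀, hM₀⟩ hcpt hB fun M hM => (hc hM).2.2.2⟩

theorem Minimal.isSeparatedBetween_of_ssubset (hL : Minimal (IsContinuumBetween A B) L)
    (hA : IsClosed A) (hB : IsClosed B) (hF : IsClosed F) (hFL : F ⊂ L) :
    IsSeparatedBetween F A B := by
  have hFc : IsCompact F := hL.prop.1.of_isClosed_subset hF hFL.subset
  refine hFc.isSeparatedBetween hA hB fun S hSF hS hSA => Set.disjoint_iff_inter_eq_empty.2 ?_
  by_contra! hSB
  have hcl : closure S ⊆ F := closure_minimal hSF hF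
  have hScont : IsContinuumBetween A B (closure S) :=
    ⟨hFc.of_isClosed_subset isClosed_closure hcl, hS.closure,
      hSA.mono (inter_subset_inter_left _ subset_closure),
      hSB.mono (inter_subset_inter_left _ subset_closure)⟩
  exact hFL.2 ((hL.le_of_le hScont (hcl.trans hFL.1)).trans hcl)

theorem Minimal.isPreconnected_diff_union (hL : Minimal (IsContinuumBetween A B) L)
    (hA : IsClosed A) (hB : IsClosed B) (hAB : Disjoint A B) :
    IsPreconnected (L \ (A ∪ B)) := by
  obtain ⟨hLc, hLconn, hLA, hLB⟩ := hL.prop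
  rw [isPreconnected_iff_subset_of_disjoint]
  intro u v hu hv hWuv huv
  by_contra! h
  obtain ⟨x, hxW, hxu⟩ := not_subset.1 h.1
  obtain ⟨y, hyW, hyv⟩ := not_subset.1 h.2
  have hP := hL.isSeparatedBetween_of_ssubset hA hB (hLc.isClosed.sdiff hv)
    ⟨sdiff_subset, fun hLP => (hLP hxW.1).2 ((hWuv hxW).resolve_left hxu)⟩
  have hQ := hL.isSeparatedBetween_of_ssubset hA hB (hLc.isClosed.sdiff hu)
    ⟨sdiff_subset, fun hLQ => (hLQ hyW.1).2 ((hWuv hyW).resolve_right hyv)⟩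
  have hPQ : (L \ v) ∩ (L \ u) ⊆ A ∪ B := fun z ⟨⟨hzL, hzv⟩, _, hzu⟩ =>
    by_contra fun hz => (hWuv ⟨hzL, hz⟩).elim hzu hzv
  have hsep := (hP.union hQ hPQ).union (isSeparatedBetween_union hA hB hAB) inter_subset_right
  refine Set.not_disjoint_iff_nonempty_inter.2 hLB (hsep.disjoint_of_isPreconnected hLconn ?_ hLA)
  intro z hzL
  by_cases hzAB : z ∈ A ∪ B
  · exact .inr hzAB
  by_cases hzv : z ∈ v
  · by_cases hzu : z ∈ u
    · exact absurd huv (Set.nonempty_iff_ne_empty.1 ⟨z, ⟨hzL, hzAB⟩, hzu, hzv⟩)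
    · exact .inl (.inr ⟨hzL, hzu⟩)
  · exact .inl (.inl ⟨hzL, hzv⟩)

theorem IsCompact.exists_isPreconnected_subset_diff_union (hK : IsCompact K)
    (hKconn : IsPreconnected K) (hA : IsClosed A) (hB : IsClosed B) (hAB : Disjoint A B)
    (hKA : (K ∩ A).Nonempty) (hKB : (K ∩ B).Nonempty) :
    ∃ S ⊆ K \ (A ∪ B), IsPreconnected S ∧ (closure S ∩ A).Nonempty ∧
      (closure S ∩ B).Nonempty := by
  obtain ⟨L, hLK, hL⟩ := IsContinuumBetween.exists_minimal hA hB ⟨hK, hKconn, hKA, hKB⟩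
  obtain ⟨-, hLconn, hLA, hLB⟩ := hL.prop
  refine ⟨L \ (A ∪ B), sdiff_subset_sdiff_left hLK, hL.isPreconnected_diff_union hA hB hAB,
    hLconn.closure_diff_union_inter_nonempty hA hB hAB hLA hLB, ?_⟩
  simpa only [union_comm] using
    hLconn.closure_diff_union_inter_nonempty hB hA hAB.symm hLB hLA

end Continuum

section Walk

variable {α : Type*} {R : α → α → Prop}

theorem Relation.reflTransGen_of_forall_exists_rel {a b : α}
    (h : ∀ s : Set α, a ∈ s → b ∉ s → ∃ x ∈ s, ∃ y ∉ s, R x y) : Relation.ReflTransGen R a b := by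
  by_contra hab
  obtain ⟨x, hx, y, hy, hxy⟩ := h {c | Relation.ReflTransGen R a c} .refl hab
  exact hy (Relation.ReflTransGen.tail hx hxy)

theorem List.exists_isChain_cons_forall_mem (h : ∀ x y, Relation.ReflTransGen R x y) :
    ∀ (s : List α) (a : α), ∃ t, IsChain R (a :: t) ∧ ∀ x ∈ s, x ∈ a :: t
  | [], a => ⟨[], .singleton a, by simp⟩
  | w :: s, a => by
    obtain ⟨m, hm, hmw⟩ := exists_isChain_cons_of_relationReflTransGen (h a w)
    obtain ⟨t, ht, hst⟩ := exists_isChain_cons_forall_mem h s w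
    have hw : w ∈ a :: m := hmw ▸ getLast_mem _
    refine ⟨m ++ t, ?_, ?_⟩
    · rw [← cons_append]
      refine hm.append ht.tail fun x hx y hy => ?_
      rw [getLast?_eq_some_getLast (cons_ne_nil a m), hmw, Option.mem_some_iff] at hx
      exact hx ▸ (isChain_cons.1 ht).1 y hy
    · have hsub : w :: t ⊆ (a :: m) ++ t :=
        cons_subset.2 ⟨mem_append_left _ hw, subset_append_right _ _⟩
      exact fun x hx => hsub ((mem_cons.1 hx).elim (· ▸ mem_cons_self ..) (hst x))

theorem Relation.exists_surjective_walk [Finite α] [Nonempty α]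
    (h : ∀ x y, Relation.ReflTransGen R x y) :
    ∃ (ℓ : ℕ) (σ : Fin (ℓ + 1) → α), Function.Surjective σ ∧
      ∀ j : Fin ℓ, R (σ j.castSucc) (σ j.succ) := by
  obtain ⟨s, -, hs⟩ := Finite.exists_univ_list α
  obtain ⟨t, ht, hst⟩ := List.exists_isChain_cons_forall_mem h s (Classical.arbitrary α)
  refine ⟨t.length, fun j => (_ :: t)[j], fun x => ?_,
    fun j => List.isChain_iff_getElem.1 ht j (by simp)⟩
  obtain ⟨n, hn, hx⟩ := List.mem_iff_getElem.1 (hst x (hs x))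
  exact ⟨⟨n, hn⟩, hx⟩

end Walk

theorem IsClosed.connectedComponentIn {X : Type*} [TopologicalSpace X] {F : Set X}
    (hF : IsClosed F) (x : X) : IsClosed (connectedComponentIn F x) := by
  by_cases hx : x ∈ F
  · refine isClosed_of_closure_subset <| isPreconnected_connectedComponentIn.closure
      |>.subset_connectedComponentIn (subset_closure (mem_connectedComponentIn hx)) ?_
    exact closure_minimal (connectedComponentIn_subset F x) hF
  · rw [connectedComponentIn_eq_empty hx]
    exact isClosed_empty

namespace IsComponentOf

variable {S C D : Set E2}

theorem subset (h : IsComponentOf S C) : C ⊆ S := by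
  obtain ⟨x, -, rfl⟩ := h
  exact connectedComponentIn_subset S x

theorem nonempty (h : IsComponentOf S C) : C.Nonempty := by
  obtain ⟨x, hx, rfl⟩ := h
  exact ⟨x, mem_connectedComponentIn hx⟩

theorem isClosed (h : IsComponentOf S C) (hS : IsClosed S) : IsClosed C := by
  obtain ⟨x, -, rfl⟩ := h
  exact hS.connectedComponentIn x

theorem eq_of_not_disjoint (hC : IsComponentOf S C) (hD : IsComponentOf S D)
    (hCD : ¬Disjoint C D) : C = D := by
  obtain ⟨x, -, rfl⟩ := hC
  obtain ⟨y, -, rfl⟩ := hD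
  obtain ⟨z, hzx, hzy⟩ := Set.not_disjoint_iff.1 hCD
  rw [connectedComponentIn_eq hzx, connectedComponentIn_eq hzy]

end IsComponentOf

theorem IsPreconnected.exists_isComponentOf_superset {S T : Set E2} (hT : IsPreconnected T)
    (hTne : T.Nonempty) (hTS : T ⊆ S) : ∃ C, IsComponentOf S C ∧ T ⊆ C := by
  obtain ⟨x, hx⟩ := hTne
  exact ⟨_, ⟨x, hTS hx, rfl⟩, hT.subset_connectedComponentIn hx hTS⟩

theorem exists_isComponentOf_diff_iUnion_across {ι : Type*} [Finite ι] {K : Set E2}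
    (hK : IsCompact K) (hKconn : IsPreconnected K) {Hc : ι → Set E2}
    (hHc : ∀ i, IsClosed (Hc i)) (hdisj : Pairwise (Disjoint on Hc))
    (hKH : ∀ i, (K ∩ Hc i).Nonempty) {s : Set ι} {i j : ι} (hi : i ∈ s) (hj : j ∉ s) :
    ∃ x ∈ s, ∃ y ∉ s, ∃ Γ, IsComponentOf (K \ ⋃ k, Hc k) Γ ∧
      (closure Γ ∩ Hc x).Nonempty ∧ (closure Γ ∩ Hc y).Nonempty := by
  have hunion : ⋃ k, Hc k = (⋃ k ∈ s, Hc k) ∪ ⋃ k ∈ sᶜ, Hc k := by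
    rw [← biUnion_union, union_compl_self, biUnion_univ]
  have hAB : Disjoint (⋃ k ∈ s, Hc k) (⋃ k ∈ sᶜ, Hc k) := by
    simp only [disjoint_iUnion_left, disjoint_iUnion_right]
    exact fun k' hk' k hk => hdisj fun h => hk' (h ▸ hk)
  obtain ⟨S, hSK, hS, hSA, hSB⟩ := hK.exists_isPreconnected_subset_diff_union hKconn
    (s.toFinite.isClosed_biUnion fun k _ => hHc k) (sᶜ.toFinite.isClosed_biUnion fun k _ => hHc k)
    hAB ((hKH i).mono (inter_subset_inter_right _ (subset_biUnion_of_mem hi)))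
    ((hKH j).mono (inter_subset_inter_right _ (subset_biUnion_of_mem (u := Hc) hj)))
  obtain ⟨Γ, hΓ, hSΓ⟩ := hS.exists_isComponentOf_superset
    (closure_nonempty_iff.1 (hSA.mono inter_subset_left)) (hunion ▸ hSK)
  obtain ⟨a, haS, haA⟩ := hSA
  obtain ⟨b, hbS, hbB⟩ := hSB
  obtain ⟨x, hx, hax⟩ := mem_iUnion₂.1 haA
  obtain ⟨y, hy, hby⟩ := mem_iUnion₂.1 hbB
  exact ⟨x, hx, y, hy, Γ, hΓ, ⟨a, closure_mono hSΓ haS, hax⟩, ⟨b, closure_mono hSΓ hbS, hby⟩⟩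

theorem components_chain_general (K : Set E2) (hKc : IsCompact K) (hKconn : IsConnected K)
    (p : ℕ) (hp : 2 ≤ p)
    (H : Set E2) (hHc : IsCompact H) (hHK : H ⊆ K)
    (Hc : Fin p → Set E2)
    (hcomp : ∀ i, IsComponentOf H (Hc i))
    (hinj : Function.Injective Hc)
    (hcover : H = ⋃ i, Hc i) :
    ∃ (ℓ : ℕ) (σ : Fin (ℓ + 1) → Fin p), Function.Surjective σ ∧
      ∃ Γ : Fin ℓ → Set E2,
        (∀ j, IsComponentOf (K \ H) (Γ j)) ∧
        ∀ j : Fin ℓ,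
          (closure (Γ j) ∩ Hc (σ j.castSucc)).Nonempty ∧
          (closure (Γ j) ∩ Hc (σ j.succ)).Nonempty := by
  have : Nonempty (Fin p) := ⟨⟨0, by omega⟩⟩
  have hdisj : Pairwise (Disjoint on Hc) := fun i j hij =>
    by_contra fun h => hinj.ne hij ((hcomp i).eq_of_not_disjoint (hcomp j) h)
  have hKH : ∀ i, (K ∩ Hc i).Nonempty := fun i =>
    (hcomp i).nonempty.mono fun x hx => ⟨hHK ((hcomp i).subset hx), hx⟩
  subst hcover
  obtain ⟨ℓ, σ, hσ, hwalk⟩ := Relation.exists_surjective_walk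
    (R := fun i j => ∃ Γ, IsComponentOf (K \ ⋃ k, Hc k) Γ ∧
      (closure Γ ∩ Hc i).Nonempty ∧ (closure Γ ∩ Hc j).Nonempty)
    fun i j => Relation.reflTransGen_of_forall_exists_rel fun s hi hj =>
      exists_isComponentOf_diff_iUnion_across hKc hKconn.isPreconnected
        (fun k => (hcomp k).isClosed hHc.isClosed) hdisj hKH hi hj
  choose Γ hΓ using hwalk
  exact ⟨ℓ, σ, hσ, Γ, fun j => (hΓ j).1, fun j => (hΓ j).2⟩

/-- If `K ⊆ ℝ²` is compact, connected, with `ℋ¹(K) < ∞`, and `H` is a nonempty compact subset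
of `K` with exactly `p ≥ 2` connected components `H¹, …, Hᵖ`, then there exist indices
`σ₀, …, σ_ℓ` covering `{1, …, p}` and connected components `Γ₁, …, Γ_ℓ` of `K \ H` such that
the closure of `Γⱼ` meets both `H^{σ_{j-1}}` and `H^{σ_j}`. -/
theorem components_chain (K : Set E2) (hKc : IsCompact K) (hKconn : IsConnected K)
    (hKfin : μH[1] K < ⊤)
    (p : ℕ) (hp : 2 ≤ p)
    (H : Set E2) (hHc : IsCompact H) (hHne : H.Nonempty) (hHK : H ⊆ K)
    (Hc : Fin p → Set E2)
    (hcomp : ∀ i, IsComponentOf H (Hc i))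
    (hinj : Function.Injective Hc)
    (hcover : H = ⋃ i, Hc i) :
    ∃ (ℓ : ℕ) (σ : Fin (ℓ + 1) → Fin p), Function.Surjective σ ∧
      ∃ Γ : Fin ℓ → Set E2,
        (∀ j, IsComponentOf (K \ H) (Γ j)) ∧
        ∀ j : Fin ℓ,
          (closure (Γ j) ∩ Hc (σ j.castSucc)).Nonempty ∧
          (closure (Γ j) ∩ Hc (σ j.succ)).Nonempty :=
  components_chain_general K hKc hKconn p hp H hHc hHK Hc hcomp hinj hcover
end
end

section
/- Let Ω be a bounded open subset of ℝ² and let K₁, K₂: [0,1] → 𝒦(Ω̄) be two increasing functions such that K₁(s) ⊆ K₂(t) and K₂(s) ⊆ K₁(t) for every s, t ∈ [0,1] with s < t. Let Θ be the set of points t ∈ [0,1] such that K₁(t) = K₂(t). Then [0,1] \ Θ is at most countable. -/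
open MeasureTheory Filter Set
open scoped Classical

noncomputable section

/-!
For `s < t` the interlacing gives `K₁ s ∪ K₂ s ⊆ K₁ t ∩ K₂ t`. At a time `t` with
`K₁ t ≠ K₂ t` pick a point of `(K₁ t ∪ K₂ t) \ (K₁ t ∩ K₂ t)` and a basic open set around it
missing the closed set `K₁ t ∩ K₂ t`. A later time `t'` cannot reuse this basic set, since the
point then lies in `K₁ t' ∩ K₂ t'`; so the bad times inject into a countable basis of `ℝ²`.
-/

theorem Set.countable_setOf_not_subset_of_lt {X ι : Type*} [TopologicalSpace X]
    [SecondCountableTopology X] [LinearOrder ι] {S : Set ι} {A B : ι → Set X}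
    (hA : ∀ t ∈ S, IsClosed (A t)) (hBA : ∀ s ∈ S, ∀ t ∈ S, s < t → B s ⊆ A t) :
    {t ∈ S | ¬ B t ⊆ A t}.Countable := by
  set T := {t ∈ S | ¬ B t ⊆ A t}
  obtain ⟨b, hbc, -, hb⟩ := TopologicalSpace.exists_countable_basis X
  have hchoice : ∀ t ∈ T, ∃ U ∈ b, U ⊆ (A t)ᶜ ∧ ∃ x ∈ U, x ∈ B t := by
    rintro t ⟨htS, hnot⟩
    obtain ⟨x, hxB, hxA⟩ := not_subset.mp hnot
    obtain ⟨U, hUb, hxU, hUA⟩ := hb.exists_subset_of_mem_open hxA (hA t htS).isOpen_compl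
    exact ⟨U, hUb, hUA, x, hxU, hxB⟩
  choose! U hUb hUA x hxU hxB using hchoice
  have hne : ∀ s ∈ T, ∀ t ∈ T, s < t → U s ≠ U t :=
    fun s hs t ht hst hU => hUA t ht (hU ▸ hxU s hs) (hBA s hs.1 t ht.1 hst (hxB s hs))
  have hinj : InjOn U T := by
    intro s hs t ht hU
    by_contra hst
    rcases lt_or_gt_of_ne hst with h | h
    · exact hne s hs t ht h hU
    · exact hne t ht s hs h hU.symm
  exact (mapsTo_iff_subset_preimage.mpr hUb).countable_of_injOn hinj hbc

theorem Set.eq_of_union_subset_inter {α : Type*} {s t : Set α} (h : s ∪ t ⊆ s ∩ t) : s = t :=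
  subset_antisymm (subset_union_left.trans h |>.trans inter_subset_right)
    (subset_union_right.trans h |>.trans inter_subset_left)

theorem interlaced_increasing_countable_general (Ω : Set E2)
    (K₁ K₂ : ℝ → Set E2)
    (hK₁ : ∀ t ∈ Set.Icc (0:ℝ) 1, IsCompact (K₁ t) ∧ K₁ t ⊆ closure Ω)
    (hK₂ : ∀ t ∈ Set.Icc (0:ℝ) 1, IsCompact (K₂ t) ∧ K₂ t ⊆ closure Ω)
    (hK₁mono : ∀ s ∈ Set.Icc (0:ℝ) 1, ∀ t ∈ Set.Icc (0:ℝ) 1, s ≤ t → K₁ s ⊆ K₁ t)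
    (hK₂mono : ∀ s ∈ Set.Icc (0:ℝ) 1, ∀ t ∈ Set.Icc (0:ℝ) 1, s ≤ t → K₂ s ⊆ K₂ t)
    (hcross : ∀ s ∈ Set.Icc (0:ℝ) 1, ∀ t ∈ Set.Icc (0:ℝ) 1, s < t →
      K₁ s ⊆ K₂ t ∧ K₂ s ⊆ K₁ t) :
    (Set.Icc (0:ℝ) 1 \ {t ∈ Set.Icc (0:ℝ) 1 | K₁ t = K₂ t}).Countable := by
  have hclosed : ∀ t ∈ Icc (0:ℝ) 1, IsClosed (K₁ t ∩ K₂ t) := fun t ht =>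
    (hK₁ t ht).1.isClosed.inter (hK₂ t ht).1.isClosed
  have hunion : ∀ s ∈ Icc (0:ℝ) 1, ∀ t ∈ Icc (0:ℝ) 1, s < t → K₁ s ∪ K₂ s ⊆ K₁ t ∩ K₂ t :=
    fun s hs t ht hst => union_subset
      (subset_inter (hK₁mono s hs t ht hst.le) (hcross s hs t ht hst).1)
      (subset_inter (hcross s hs t ht hst).2 (hK₂mono s hs t ht hst.le))
  refine (countable_setOf_not_subset_of_lt hclosed hunion).mono ?_
  rintro t ⟨ht, hbad⟩
  exact ⟨ht, fun h => hbad ⟨ht, eq_of_union_subset_inter h⟩⟩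

/-- If `K₁, K₂ : [0,1] → 𝒦(closure Ω)` are increasing and interlaced
(`K₁(s) ⊆ K₂(t)` and `K₂(s) ⊆ K₁(t)` whenever `s < t`), then the set of times at which
`K₁(t) ≠ K₂(t)` is at most countable. -/
theorem interlaced_increasing_countable (Ω : Set E2) (hΩo : IsOpen Ω)
    (hΩb : Bornology.IsBounded Ω)
    (K₁ K₂ : ℝ → Set E2)
    (hK₁ : ∀ t ∈ Set.Icc (0:ℝ) 1, IsCompact (K₁ t) ∧ K₁ t ⊆ closure Ω)
    (hK₂ : ∀ t ∈ Set.Icc (0:ℝ) 1, IsCompact (K₂ t) ∧ K₂ t ⊆ closure Ω)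
    (hK₁mono : ∀ s ∈ Set.Icc (0:ℝ) 1, ∀ t ∈ Set.Icc (0:ℝ) 1, s ≤ t → K₁ s ⊆ K₁ t)
    (hK₂mono : ∀ s ∈ Set.Icc (0:ℝ) 1, ∀ t ∈ Set.Icc (0:ℝ) 1, s ≤ t → K₂ s ⊆ K₂ t)
    (hcross : ∀ s ∈ Set.Icc (0:ℝ) 1, ∀ t ∈ Set.Icc (0:ℝ) 1, s < t →
      K₁ s ⊆ K₂ t ∧ K₂ s ⊆ K₁ t) :
    (Set.Icc (0:ℝ) 1 \ {t ∈ Set.Icc (0:ℝ) 1 | K₁ t = K₂ t}).Countable :=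
  interlaced_increasing_countable_general Ω K₁ K₂ hK₁ hK₂ hK₁mono hK₂mono hcross
end
end

section
/- Let Ω be a bounded open subset of ℝ², let K: [0,1] → 𝒦(Ω̄) be an increasing function, and define K⁻(t) := closure(⋃_{s<t} K(s)) for 0 < t ≤ 1 and K⁺(t) := ⋂_{s>t} K(s) for 0 ≤ t < 1. Then K⁻(t) ⊆ K(t) ⊆ K⁺(t) for 0 < t < 1. Moreover, letting Θ be the set of t ∈ (0,1) with K⁻(t) = K⁺(t), the set [0,1] \ Θ is at most countable, and for every t ∈ Θ and every sequence (t_n) in [0,1] converging to t, one has K(t_n) → K(t) in the Hausdorff metric. -/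
open MeasureTheory Filter Set
open scoped Classical

noncomputable section

open Topology

/-! The inclusions `K⁻(t) ⊆ K(t) ⊆ K⁺(t)` are monotonicity plus closedness of `K(t)`.
If `K⁺(t) ⊄ K⁻(t)`, some set `U` of a countable basis meets `K⁺(t)` but misses the closed set
`K⁻(t)`; no two times `t₁ < t₂` can share such a `U`, since `K(s)` for `t₁ < s < t₂` would
both meet and miss it. Hence the jump times are countable.
At a time `t` with `K⁻(t) = K(t) = K⁺(t)`, compactness of `K(t)` gives `s₀ < t` with `K(t)`
inside the `ε`-thickening of `K(s₀)`, and compactness of the decreasing family `K(s)`, `s > t`,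
gives `s₁ > t` with `K(s₁)` inside the `ε`-thickening of `K(t)`. By monotonicity `K(s)` is then
`ε`-close to `K(t)` for all `s ∈ (s₀, s₁)`. -/

section Limits

variable {α X : Type*} [LinearOrder α]

def rightLimit (K : α → Set X) (t b : α) : Set X :=
  ⋂ s ∈ Ioc t b, K s

lemma subset_rightLimit {K : α → Set X} {a b t : α} (hK : MonotoneOn K (Icc a b))
    (ht : t ∈ Icc a b) : K t ⊆ rightLimit K t b :=
  subset_iInter₂ fun _ hs => hK ht ⟨ht.1.trans hs.1.le, hs.2⟩ hs.1.le

variable [TopologicalSpace X]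

def leftLimit (K : α → Set X) (a t : α) : Set X :=
  closure (⋃ s ∈ Ico a t, K s)

variable {K : α → Set X} {a b t : α}

lemma leftLimit_subset (hK : MonotoneOn K (Icc a b)) (ht : t ∈ Icc a b)
    (hKt : IsClosed (K t)) : leftLimit K a t ⊆ K t :=
  closure_minimal (iUnion₂_subset fun _ hs =>
    hK ⟨hs.1, hs.2.le.trans ht.2⟩ ht hs.2.le) hKt

lemma subsingleton_setOf_meets_rightLimit_misses_leftLimit [DenselyOrdered α]
    (K : α → Set X) (a b : α) (U : Set X) :
    {t ∈ Ioo a b | (rightLimit K t b ∩ U).Nonempty ∧ Disjoint (leftLimit K a t) U}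
      |>.Subsingleton := by
  intro t₁ h₁ t₂ h₂
  wlog h₁₂ : t₁ < t₂ generalizing t₁ t₂
  · rcases (not_lt.1 h₁₂).eq_or_lt with h | h
    exacts [h.symm, (this h₂ h₁ h).symm]
  obtain ⟨ht₁, ⟨y, hyK, hyU⟩, -⟩ := h₁
  obtain ⟨ht₂, -, hdisj⟩ := h₂
  obtain ⟨s, h₁s, hs₂⟩ := exists_between h₁₂
  have hys : y ∈ K s := mem_iInter₂.1 hyK s ⟨h₁s, hs₂.le.trans ht₂.2.le⟩
  have hsub : K s ⊆ leftLimit K a t₂ :=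
    have hs : s ∈ Ico a t₂ := ⟨ht₁.1.le.trans h₁s.le, hs₂⟩
    (subset_biUnion_of_mem (u := K) hs).trans subset_closure
  exact (hdisj.ne_of_mem (hsub hys) hyU rfl).elim

lemma countable_setOf_not_rightLimit_subset_leftLimit [DenselyOrdered α]
    [SecondCountableTopology X] (K : α → Set X) (a b : α) :
    {t ∈ Ioo a b | ¬ rightLimit K t b ⊆ leftLimit K a t}.Countable := by
  open TopologicalSpace in
  refine ((countable_countableBasis X).biUnion fun U _ =>
    (subsingleton_setOf_meets_rightLimit_misses_leftLimit K a b U).countable).mono ?_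
  rintro t ⟨ht, hnot⟩
  obtain ⟨y, hyR, hyL⟩ := not_subset.1 hnot
  obtain ⟨U, hUb, hyU, hUL⟩ := (isBasis_countableBasis X).exists_subset_of_mem_open hyL
    isClosed_closure.isOpen_compl
  exact mem_biUnion hUb ⟨ht, ⟨y, hyR, hyU⟩, disjoint_compl_right.mono_right hUL⟩

lemma exists_subset_of_rightLimit_subset [T2Space X] (hK : MonotoneOn K (Ioc t b))
    (htb : t < b) (hKc : ∀ s ∈ Ioc t b, IsCompact (K s)) {V : Set X} (hV : IsOpen V)
    (h : rightLimit K t b ⊆ V) : ∃ s ∈ Ioc t b, K s ⊆ V := by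
  have : Nonempty (Ioc t b) := ⟨⟨b, htb, le_rfl⟩⟩
  have hdir : Directed (· ⊇ ·) fun s : Ioc t b => K s := by
    intro i j
    have hij : min i.1 j.1 ∈ Ioc t b := ⟨lt_min i.2.1 j.2.1, min_le_of_left_le i.2.2⟩
    exact ⟨⟨_, hij⟩, hK hij i.2 (min_le_left _ _), hK hij j.2 (min_le_right _ _)⟩
  obtain ⟨⟨s, hs⟩, hsV⟩ := exists_subset_nhds_of_isCompact hdir (fun i => hKc i i.2)
    (fun x hx => hV.mem_nhds (h (mem_iInter₂.2 fun s hs => mem_iInter.1 hx ⟨s, hs⟩)))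
  exact ⟨s, hs, hsV⟩

end Limits

section Thickening

variable {α X : Type*} [LinearOrder α] [PseudoMetricSpace X] {K : α → Set X} {a t : α}

lemma exists_subset_thickening_of_subset_leftLimit (hK : MonotoneOn K (Ico a t))
    (hat : a < t) (hKt : IsCompact (K t)) (h : K t ⊆ leftLimit K a t) {ε : ℝ} (hε : 0 < ε) :
    ∃ s ∈ Ico a t, K t ⊆ Metric.thickening ε (K s) := by
  have : Nonempty (Ico a t) := ⟨⟨a, le_rfl, hat⟩⟩
  have hcover : K t ⊆ ⋃ s : Ico a t, Metric.thickening ε (K s) := by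
    rw [← Metric.thickening_iUnion, iUnion_coe_set]
    exact h.trans (Metric.closure_subset_thickening hε _)
  have hdir : Directed (· ⊆ ·) fun s : Ico a t => Metric.thickening ε (K s) := by
    intro i j
    have hij : max i.1 j.1 ∈ Ico a t := ⟨le_max_of_le_left i.2.1, max_lt i.2.2 j.2.2⟩
    exact ⟨⟨_, hij⟩, Metric.thickening_subset_of_subset ε (hK i.2 hij (le_max_left _ _)),
      Metric.thickening_subset_of_subset ε (hK j.2 hij (le_max_right _ _))⟩
  obtain ⟨⟨s, hs⟩, hsub⟩ :=
    hKt.elim_directed_cover _ (fun _ => Metric.isOpen_thickening) hcover hdir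
  exact ⟨s, hs, hsub⟩

end Thickening

section Hausdorff

variable {Ω A B : Set E2}

lemma hausDistIn_nonneg : 0 ≤ hausDistIn Ω A B := by
  refine le_max_of_le_left (Real.sSup_nonneg ?_)
  rintro _ ⟨x, -, rfl⟩
  unfold distIn
  split
  · exact Metric.diam_nonneg
  · exact Metric.infDist_nonneg

lemma hausDistIn_le_of_subset_thickening {ε : ℝ} (hε : 0 ≤ ε) (hAB : A ⊆ B)
    (hBA : B ⊆ Metric.thickening ε A) : hausDistIn Ω A B ≤ ε := by
  rcases A.eq_empty_or_nonempty with rfl | hA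
  · rw [Metric.thickening_empty, subset_empty_iff] at hBA
    simp [hausDistIn, hBA, hε]
  refine max_le (Real.sSup_le ?_ hε) (Real.sSup_le ?_ hε)
  · rintro _ ⟨x, hx, rfl⟩
    dsimp only
    rw [distIn, if_neg (hA.mono hAB).ne_empty, Metric.infDist_zero_of_mem (hAB hx)]
    exact hε
  · rintro _ ⟨y, hy, rfl⟩
    dsimp only
    rw [distIn, if_neg hA.ne_empty]
    obtain ⟨z, hz, hyz⟩ := Metric.mem_thickening_iff.1 (hBA hy)
    exact (Metric.infDist_le_dist_of_mem hz).trans hyz.le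

variable {K : ℝ → Set E2} {a b t : ℝ}

lemma eventually_hausDistIn_le (hK : MonotoneOn K (Icc a b))
    (hKc : ∀ s ∈ Icc a b, IsCompact (K s)) (ht : t ∈ Ioo a b)
    (hleft : K t ⊆ leftLimit K a t) (hright : rightLimit K t b ⊆ K t) {ε : ℝ} (hε : 0 < ε) :
    ∀ᶠ s in 𝓝[Icc a b] t, hausDistIn Ω (K s) (K t) ≤ ε := by
  have htI : t ∈ Icc a b := Ioo_subset_Icc_self ht
  obtain ⟨s₀, hs₀, hs₀K⟩ := exists_subset_thickening_of_subset_leftLimit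
    (hK.mono (Ico_subset_Icc_self.trans (Icc_subset_Icc_right ht.2.le))) ht.1 (hKc t htI)
    hleft hε
  obtain ⟨s₁, hs₁, hs₁K⟩ := exists_subset_of_rightLimit_subset
    (hK.mono (Ioc_subset_Icc_self.trans (Icc_subset_Icc_left ht.1.le))) ht.2
    (fun s hs => hKc s ⟨ht.1.le.trans hs.1.le, hs.2⟩) Metric.isOpen_thickening
    (hright.trans (Metric.self_subset_thickening hε _))
  filter_upwards [self_mem_nhdsWithin, nhdsWithin_le_nhds (Ioo_mem_nhds hs₀.2 hs₁.1)]
    with s hs ⟨h₀s, hs₁'⟩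
  have hs₀I : s₀ ∈ Icc a b := ⟨hs₀.1, hs₀.2.le.trans htI.2⟩
  have hs₁I : s₁ ∈ Icc a b := ⟨htI.1.trans hs₁.1.le, hs₁.2⟩
  rcases le_total s t with hst | hts
  · exact hausDistIn_le_of_subset_thickening hε.le (hK hs htI hst)
      (hs₀K.trans (Metric.thickening_subset_of_subset ε (hK hs₀I hs h₀s.le)))
  · rw [hausDistIn, max_comm]
    exact hausDistIn_le_of_subset_thickening hε.le (hK htI hs hts)
      ((hK hs hs₁I hs₁'.le).trans hs₁K)

lemma tendsto_hausDistIn_nhdsWithin (hK : MonotoneOn K (Icc a b))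
    (hKc : ∀ s ∈ Icc a b, IsCompact (K s)) (ht : t ∈ Ioo a b)
    (hleft : K t ⊆ leftLimit K a t) (hright : rightLimit K t b ⊆ K t) :
    Tendsto (fun s => hausDistIn Ω (K s) (K t)) (𝓝[Icc a b] t) (𝓝 0) :=
  tendsto_order.2 ⟨fun _ h => Eventually.of_forall fun _ => h.trans_le hausDistIn_nonneg,
    fun _ hε => (eventually_hausDistIn_le hK hKc ht hleft hright (half_pos hε)).mono
      fun _ h => h.trans_lt (half_lt_self hε)⟩

end Hausdorff

theorem increasing_compact_valued_continuity_general (Ω : Set E2)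
    (K : ℝ → Set E2)
    (hKc : ∀ t ∈ Set.Icc (0:ℝ) 1, IsCompact (K t) ∧ K t ⊆ closure Ω)
    (hKmono : ∀ s ∈ Set.Icc (0:ℝ) 1, ∀ t ∈ Set.Icc (0:ℝ) 1, s ≤ t → K s ⊆ K t) :
    (∀ t ∈ Set.Ioo (0:ℝ) 1,
        closure (⋃ s ∈ Set.Ico (0:ℝ) t, K s) ⊆ K t ∧ K t ⊆ ⋂ s ∈ Set.Ioc t 1, K s) ∧
    (Set.Icc (0:ℝ) 1 \
        {t ∈ Set.Ioo (0:ℝ) 1 |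
          closure (⋃ s ∈ Set.Ico (0:ℝ) t, K s) = ⋂ s ∈ Set.Ioc t 1, K s}).Countable ∧
    ∀ t ∈ {t ∈ Set.Ioo (0:ℝ) 1 |
        closure (⋃ s ∈ Set.Ico (0:ℝ) t, K s) = ⋂ s ∈ Set.Ioc t 1, K s},
      ∀ tn : ℕ → ℝ, (∀ n, tn n ∈ Set.Icc (0:ℝ) 1) →
        Filter.Tendsto tn Filter.atTop (nhds t) →
          TendstoHausdorff Ω (fun n => K (tn n)) (K t) := by
  have hK : MonotoneOn K (Icc 0 1) := hKmono
  have hcpt : ∀ t ∈ Icc (0:ℝ) 1, IsCompact (K t) := fun t ht => (hKc t ht).1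
  have hsandwich : ∀ t ∈ Ioo (0:ℝ) 1, leftLimit K 0 t ⊆ K t ∧ K t ⊆ rightLimit K t 1 :=
    fun t ht => have htI := Ioo_subset_Icc_self ht
      ⟨leftLimit_subset hK htI (hcpt t htI).isClosed, subset_rightLimit hK htI⟩
  refine ⟨hsandwich, ?_, ?_⟩
  · refine (((countable_singleton 1).insert 0).union
      (countable_setOf_not_rightLimit_subset_leftLimit K 0 1)).mono ?_
    rintro t ⟨⟨ht₀, ht₁⟩, hΘ⟩
    rcases ht₀.eq_or_lt with rfl | ht₀
    · exact Or.inl (mem_insert _ _)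
    rcases ht₁.eq_or_lt with rfl | ht₁
    · exact Or.inl (mem_insert_of_mem _ rfl)
    have ht : t ∈ Ioo (0:ℝ) 1 := ⟨ht₀, ht₁⟩
    have hle := (hsandwich t ht).1.trans (hsandwich t ht).2
    exact Or.inr ⟨ht, fun hge => hΘ ⟨ht, hle.antisymm hge⟩⟩
  · rintro t ⟨ht, hΘ⟩ tn htn htt
    exact (tendsto_hausDistIn_nhdsWithin hK hcpt ht ((hsandwich t ht).2.trans hΘ.ge)
      (hΘ.ge.trans (hsandwich t ht).1)).comp
      (tendsto_nhdsWithin_iff.2 ⟨htt, Eventually.of_forall htn⟩)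

/-- For an increasing compact-valued function `K : [0,1] → 𝒦(closure Ω)`, with
`K⁻(t) = closure (⋃_{s<t} K(s))` and `K⁺(t) = ⋂_{s>t} K(s)`, one has
`K⁻(t) ⊆ K(t) ⊆ K⁺(t)` on `(0,1)`; moreover, with `Θ = {t ∈ (0,1) : K⁻(t) = K⁺(t)}`,
the set `[0,1] \ Θ` is at most countable, and `K(tₙ) → K(t)` in the Hausdorff metric for
every `t ∈ Θ` and every sequence `tₙ ∈ [0,1]` converging to `t`. -/
theorem increasing_compact_valued_continuity (Ω : Set E2) (hΩo : IsOpen Ω)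
    (hΩb : Bornology.IsBounded Ω)
    (K : ℝ → Set E2)
    (hKc : ∀ t ∈ Set.Icc (0:ℝ) 1, IsCompact (K t) ∧ K t ⊆ closure Ω)
    (hKmono : ∀ s ∈ Set.Icc (0:ℝ) 1, ∀ t ∈ Set.Icc (0:ℝ) 1, s ≤ t → K s ⊆ K t) :
    (∀ t ∈ Set.Ioo (0:ℝ) 1,
        closure (⋃ s ∈ Set.Ico (0:ℝ) t, K s) ⊆ K t ∧ K t ⊆ ⋂ s ∈ Set.Ioc t 1, K s) ∧
    (Set.Icc (0:ℝ) 1 \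
        {t ∈ Set.Ioo (0:ℝ) 1 |
          closure (⋃ s ∈ Set.Ico (0:ℝ) t, K s) = ⋂ s ∈ Set.Ioc t 1, K s}).Countable ∧
    ∀ t ∈ {t ∈ Set.Ioo (0:ℝ) 1 |
        closure (⋃ s ∈ Set.Ico (0:ℝ) t, K s) = ⋂ s ∈ Set.Ioc t 1, K s},
      ∀ tn : ℕ → ℝ, (∀ n, tn n ∈ Set.Icc (0:ℝ) 1) →
        Filter.Tendsto tn Filter.atTop (nhds t) →
          TendstoHausdorff Ω (fun n => K (tn n)) (K t) :=
  increasing_compact_valued_continuity_general Ω K hKc hKmono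
end
end

section
/- Let X be a real Hilbert space, let g: [0,1] → X be absolutely continuous with derivative ġ, and let F: X × [0,1] → ℝ be a function such that F(·,t) is continuously Fréchet differentiable on X for every t ∈ [0,1], with differential d₁F(·,t). Fix t₀ ∈ [0,1], set ψ(t) := F(g(t),t) and ψ₀(t) := F(g(t₀),t). Assume that t₀ is a differentiability point of both ψ and g, that t₀ is a Lebesgue point of ġ, and that d₁F: X × [0,1] → X* is continuous at the point (g(t₀),t₀). Then ψ₀ is differentiable at t₀ and ψ̇₀(t₀) = ψ̇(t₀) − d₁F(g(t₀),t₀)(ġ(t₀)). -/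
open Filter Set Topology

/-!
Write `F (g t₀) t = F (g t) t - (F (g t) t - F (g t₀) t)`. By the mean value inequality on a small
ball around `g t₀`, continuity of `d₁F` at `(g t₀, t₀)` makes the increment
`F (g t) t - F (g t₀) t` equal to `d₁F (g t₀) t₀ (g t - g t₀)` up to `o(‖g t - g t₀‖)`, uniformly in
`t` near `t₀`; since `g t - g t₀ = O(t - t₀)`, this increment has derivative
`d₁F (g t₀) t₀ (g' t₀)` at `t₀`.
-/

theorem isLittleO_apply_sub_apply_sub_fderiv {E G T : Type*} [NormedAddCommGroup E]
    [NormedSpace ℝ E] [NormedAddCommGroup G] [NormedSpace ℝ G] [TopologicalSpace T]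
    {f : E → T → G} {f' : E → T → E →L[ℝ] G} {s : Set T} {t₀ : T} {g : T → E}
    (hf : ∀ t ∈ s, ∀ x, HasFDerivAt (f · t) (f' x t) x)
    (hf' : ContinuousWithinAt (fun p : E × T => f' p.1 p.2) (univ ×ˢ s) (g t₀, t₀))
    (hg : ContinuousWithinAt g s t₀) :
    (fun t => f (g t) t - f (g t₀) t - f' (g t₀) t₀ (g t - g t₀)) =o[𝓝[s] t₀]
      fun t => g t - g t₀ := by
  refine Asymptotics.isLittleO_iff.2 fun c hc => ?_
  have hnear : ∀ᶠ p in 𝓝 (g t₀) ×ˢ 𝓝[s] t₀, f' p.1 p.2 ∈ Metric.ball (f' (g t₀) t₀) c := by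
    rw [← nhdsWithin_univ, ← nhdsWithin_prod_eq]
    exact hf' (Metric.ball_mem_nhds _ hc)
  obtain ⟨pa, hpa, pb, hpb, hp⟩ := eventually_prod_iff.1 hnear
  obtain ⟨δ, hδ, hball⟩ := Metric.eventually_nhds_iff_ball.1 hpa
  filter_upwards [hpb, self_mem_nhdsWithin, hg (Metric.ball_mem_nhds _ hδ)] with t hbt hts hgt
  simpa using (convex_ball (g t₀) δ).norm_image_sub_le_of_norm_hasFDerivWithin_le'
    (fun z _ => (hf t hts z).hasFDerivWithinAt)
    (fun z hz => (mem_ball_iff_norm.1 (hp (hball z hz) hbt)).le)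
    (Metric.mem_ball_self hδ) hgt

theorem hasDerivWithinAt_apply_sub_apply_const {E G : Type*} [NormedAddCommGroup E]
    [NormedSpace ℝ E] [NormedAddCommGroup G] [NormedSpace ℝ G]
    {f : E → ℝ → G} {f' : E → ℝ → E →L[ℝ] G} {s : Set ℝ} {t₀ : ℝ} {g : ℝ → E} {g' : E}
    (hf : ∀ t ∈ s, ∀ x, HasFDerivAt (f · t) (f' x t) x)
    (hf' : ContinuousWithinAt (fun p : E × ℝ => f' p.1 p.2) (univ ×ˢ s) (g t₀, t₀))
    (hg : HasDerivWithinAt g g' s t₀) :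
    HasDerivWithinAt (fun t => f (g t) t - f (g t₀) t) (f' (g t₀) t₀ g') s t₀ := by
  rw [hasDerivWithinAt_iff_isLittleO]
  have hlin : (fun t => f' (g t₀) t₀ (g t - g t₀ - (t - t₀) • g')) =o[𝓝[s] t₀]
      fun t => t - t₀ :=
    ((f' (g t₀) t₀).isBigO_comp _ _).trans_isLittleO (hasDerivWithinAt_iff_isLittleO.1 hg)
  refine (((isLittleO_apply_sub_apply_sub_fderiv hf hf' hg.continuousWithinAt).trans_isBigO
    hg.hasFDerivWithinAt.isBigO_sub).add hlin).congr_left fun t => ?_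
  simp only [map_sub, map_smul]
  abel

theorem chain_rule_hilbert_general {X : Type} [NormedAddCommGroup X] [InnerProductSpace ℝ X]
    (g g' : ℝ → X)
    (F : X → ℝ → ℝ) (dF : X → ℝ → (X →L[ℝ] ℝ))
    (hF : ∀ t ∈ Set.Icc (0:ℝ) 1, ∀ x : X, HasFDerivAt (fun y => F y t) (dF x t) x)
    (t₀ : ℝ)
    (ψ' : ℝ)
    (hψ : HasDerivWithinAt (fun t => F (g t) t) ψ' (Set.Icc (0:ℝ) 1) t₀)
    (hgdiff : HasDerivWithinAt g (g' t₀) (Set.Icc (0:ℝ) 1) t₀)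
    (hdF : ContinuousWithinAt (fun p : X × ℝ => dF p.1 p.2)
      (Set.univ ×ˢ Set.Icc (0:ℝ) 1) (g t₀, t₀)) :
    HasDerivWithinAt (fun t => F (g t₀) t)
      (ψ' - dF (g t₀) t₀ (g' t₀)) (Set.Icc (0:ℝ) 1) t₀ := by
  simpa only [Pi.sub_def, sub_sub_cancel] using hψ.sub (hasDerivWithinAt_apply_sub_apply_const hF hdF hgdiff)

/-- Chain-rule lemma in a Hilbert space: if `g : [0,1] → X` is absolutely continuous with
derivative `g'`, `F(·,t)` is `C¹` on `X` with differential `d₁F(·,t)`, `t₀` is a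
differentiability point of `ψ(t) = F(g(t),t)` and of `g`, a Lebesgue point of `g'`, and
`d₁F` is continuous at `(g(t₀),t₀)`, then `ψ₀(t) = F(g(t₀),t)` is differentiable at `t₀`
with `ψ₀'(t₀) = ψ'(t₀) − d₁F(g(t₀),t₀)(g'(t₀))`. -/
theorem chain_rule_hilbert {X : Type} [NormedAddCommGroup X] [InnerProductSpace ℝ X]
    [CompleteSpace X]
    (g g' : ℝ → X)
    (hg'int : IntervalIntegrable g' MeasureTheory.volume 0 1)
    (hgAC : ∀ t ∈ Set.Icc (0:ℝ) 1, g t = g 0 + ∫ s in (0:ℝ)..t, g' s)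
    (F : X → ℝ → ℝ) (dF : X → ℝ → (X →L[ℝ] ℝ))
    (hF : ∀ t ∈ Set.Icc (0:ℝ) 1, ∀ x : X, HasFDerivAt (fun y => F y t) (dF x t) x)
    (hdFcont : ∀ t ∈ Set.Icc (0:ℝ) 1, Continuous fun x => dF x t)
    (t₀ : ℝ) (ht₀ : t₀ ∈ Set.Icc (0:ℝ) 1)
    (ψ' : ℝ)
    (hψ : HasDerivWithinAt (fun t => F (g t) t) ψ' (Set.Icc (0:ℝ) 1) t₀)
    (hgdiff : HasDerivWithinAt g (g' t₀) (Set.Icc (0:ℝ) 1) t₀)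
    (hLeb : Filter.Tendsto
      (fun h : ℝ => (1 / h) * ∫ s in t₀..(t₀ + h), ‖g' s - g' t₀‖)
      (nhdsWithin 0 {h : ℝ | h ≠ 0 ∧ t₀ + h ∈ Set.Icc (0:ℝ) 1}) (nhds 0))
    (hdF : ContinuousWithinAt (fun p : X × ℝ => dF p.1 p.2)
      (Set.univ ×ˢ Set.Icc (0:ℝ) 1) (g t₀, t₀)) :
    HasDerivWithinAt (fun t => F (g t₀) t)
      (ψ' - dF (g t₀) t₀ (g' t₀)) (Set.Icc (0:ℝ) 1) t₀ :=
  chain_rule_hilbert_general g g' F dF hF t₀ ψ' hψ hgdiff hdF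
end
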